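/- arXiv:math/9806081 — 10 statements merged into one kernel-verified Lean document; each statement's English description precedes it below -/
import Mathlib

section
/- Let 0 < a < 1. Suppose w : (0,1] → ℝ is continuous, differentiable on (0,1), satisfies 0 ≤ w(x) ≤ 1 for all x ∈ (0,1], solves √(Δ_a(w(x)))·w'(x) = −(1−w(x)²)/x on (0,1), and w(1) = 0. Then w(y)² ≤ 1 − y^{2/√(1−a²)} for all y ∈ (0,1]. -/
/-!
Put `b = √(1 - a²)`. The function `g x = (1 - w x²) · x^(-2/b)` equals `1` at `x = 1` and is
nonincreasing on `(0, 1]`: by the ODE, `x · w' = -(1 - w²) / √Δ_a(w)`, and `√Δ_a(w) ≥ b w` turns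
this into `-2 x w w' ≤ 2 (1 - w²) / b`, which is exactly `g' ≤ 0`. Hence `g y ≥ 1`, i.e.
`1 - w(y)² ≥ y^(2/b)`.
-/

open Real Set

lemma sqrt_one_sub_sq_mul_le_sqrt {w : ℝ} (a : ℝ) (hw : 0 ≤ w) :
    √(1 - a ^ 2) * w ≤ √((1 - a ^ 2) * w ^ 2 + a ^ 2) := by
  calc √(1 - a ^ 2) * w = √((1 - a ^ 2) * w ^ 2) := by
        rw [sqrt_mul' _ (sq_nonneg w), sqrt_sq hw]
    _ ≤ √((1 - a ^ 2) * w ^ 2 + a ^ 2) := sqrt_le_sqrt (by nlinarith [sq_nonneg a])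

lemma hasDerivAt_one_sub_sq_mul_rpow {w : ℝ → ℝ} {w' x : ℝ} (c : ℝ) (hw : HasDerivAt w w' x)
    (hx : 0 < x) :
    HasDerivAt (fun t => (1 - w t ^ 2) * t ^ c)
      (x ^ (c - 1) * (c * (1 - w x ^ 2) - 2 * x * w x * w')) x := by
  have hxc : x ^ c = x ^ (c - 1) * x := by
    rw [← rpow_add_one hx.ne', sub_add_cancel]
  refine (((hasDerivAt_const x 1).sub (hw.pow 2)).mul
    (hasDerivAt_rpow_const (p := c) (Or.inl hx.ne'))).congr_deriv ?_
  rw [hxc]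
  simp only [Pi.sub_apply, Pi.pow_apply]
  ring

lemma neg_two_div_mul_one_sub_sq_le {b S x w w' : ℝ} (hb : 0 < b) (hS : 0 < S) (hx : 0 < x)
    (hq : 0 ≤ 1 - w ^ 2) (hbw : b * w ≤ S) (hode : S * w' = -(1 - w ^ 2) / x) :
    -(2 / b) * (1 - w ^ 2) ≤ 2 * x * w * w' := by
  have hxw' : x * w' = -(1 - w ^ 2) / S := by
    rw [eq_div_iff hx.ne'] at hode
    rw [eq_div_iff hS.ne']
    linear_combination hode
  have hwS : w / S ≤ 1 / b := by
    rw [div_le_div_iff₀ hS hb]; linarith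
  have hsplit : -(2 / b) * (1 - w ^ 2) - 2 * x * w * w' = 2 * (1 - w ^ 2) * (w / S - 1 / b) := by
    rw [mul_assoc 2 x, mul_comm x w, mul_assoc, mul_assoc w, hxw']; ring
  nlinarith [mul_nonpos_of_nonneg_of_nonpos (by linarith : 0 ≤ 2 * (1 - w ^ 2)) (sub_nonpos.2 hwS)]

/-- For `0 < a < 1`, a solution of the uniformization ODE with `0 ≤ w ≤ 1` and `w 1 = 0`
satisfies `w(y)² ≤ 1 - y^(2/√(1-a²))` on `(0,1]`. -/
theorem stmt_2 (a : ℝ) (ha0 : 0 < a) (ha1 : a < 1) (w : ℝ → ℝ)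
    (hcont : ContinuousOn w (Set.Ioc (0:ℝ) 1))
    (hdiff : ∀ x ∈ Set.Ioo (0:ℝ) 1, DifferentiableAt ℝ w x)
    (hbound : ∀ x ∈ Set.Ioc (0:ℝ) 1, 0 ≤ w x ∧ w x ≤ 1)
    (hode : ∀ x ∈ Set.Ioo (0:ℝ) 1,
      Real.sqrt ((1 - a^2) * (w x)^2 + a^2) * deriv w x = -(1 - (w x)^2) / x)
    (hw1 : w 1 = 0) :
    ∀ y ∈ Set.Ioc (0:ℝ) 1, (w y)^2 ≤ 1 - y ^ (2 / Real.sqrt (1 - a^2)) := by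
  intro y hy
  set b := √(1 - a ^ 2)
  have hb : 0 < b := sqrt_pos.2 (by nlinarith)
  have hanti : AntitoneOn (fun t => (1 - w t ^ 2) * t ^ (-(2 / b))) (Ioc 0 1) := by
    refine antitoneOn_of_hasDerivWithinAt_nonpos (convex_Ioc 0 1)
      ((continuousOn_const.sub (hcont.pow 2)).mul
        (continuousOn_id.rpow_const fun x hx => Or.inl hx.1.ne')) (f' := fun x =>
        x ^ (-(2 / b) - 1) * (-(2 / b) * (1 - w x ^ 2) - 2 * x * w x * deriv w x)) ?_ ?_
      <;> rw [interior_Ioc] <;> intro x hx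
    · exact (hasDerivAt_one_sub_sq_mul_rpow _ (hdiff x hx).hasDerivAt hx.1).hasDerivWithinAt
    · obtain ⟨hw0, hwle⟩ := hbound x ⟨hx.1, hx.2.le⟩
      refine mul_nonpos_of_nonneg_of_nonpos (rpow_pos_of_pos hx.1 _).le <| sub_nonpos.2
        (neg_two_div_mul_one_sub_sq_le hb (sqrt_pos.2 ?_) hx.1 (by nlinarith)
          (sqrt_one_sub_sq_mul_le_sqrt a hw0) (hode x hx))
      nlinarith [mul_nonneg (sub_nonneg.2 ha1.le) (sq_nonneg (w x))]
  have hgy := hanti hy ⟨zero_lt_one, le_rfl⟩ hy.2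
  simp only [hw1, one_rpow, rpow_neg hy.1.le] at hgy
  have hy' : 0 < y ^ (2 / b) := rpow_pos_of_pos hy.1 _
  rw [← div_eq_mul_inv, le_div_iff₀ hy'] at hgy
  linarith
end

section
/- Let 0 < a ≤ 1. Suppose w : (0,1] → ℝ is continuous, differentiable on (0,1), satisfies 0 ≤ w(x) ≤ 1 for all x ∈ (0,1], solves √(Δ_a(w(x)))·w'(x) = −(1−w(x)²)/x on (0,1), and w(1) = 0. Then w(y) ≥ (1−y²)/(1+y²) for all y ∈ (0,1]. -/
open Set

/-!
The quantity `(1 - w x) / ((1 + w x) x²)` is a first integral of the equation `x w' = -(1 - w²)`,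
which is the uniformization equation of the round sphere (`a = 1`); along its solution
`(1 - x²) / (1 + x²)` it is identically `1`. For `a ≤ 1` and `0 ≤ w ≤ 1` we have
`√Δ_a(w) ≤ 1`, so a solution of the ellipsoid's equation is a subsolution,
`x w' ≤ -(1 - w²)`, and along it the first integral is non-decreasing. Since it equals `1` at
`x = 1`, it is at most `1` on `(0, 1]`, which is the claimed lower bound.
-/

/-- `Δ_a(w)`. -/
def uniformizationDelta (a w : ℝ) : ℝ := (1 - a ^ 2) * w ^ 2 + a ^ 2

lemma sq_le_uniformizationDelta {a : ℝ} (w : ℝ) (ha : a ^ 2 ≤ 1) :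
    a ^ 2 ≤ uniformizationDelta a w := by
  unfold uniformizationDelta
  nlinarith [mul_nonneg (sub_nonneg.2 ha) (sq_nonneg w)]

lemma uniformizationDelta_le_one {a w : ℝ} (ha : a ^ 2 ≤ 1) (hw : w ^ 2 ≤ 1) :
    uniformizationDelta a w ≤ 1 := by
  unfold uniformizationDelta
  nlinarith [mul_nonneg (sub_nonneg.2 ha) (sub_nonneg.2 hw)]

lemma mul_le_of_sqrt_uniformizationDelta_mul_eq {a w d x : ℝ} (ha0 : a ≠ 0) (ha1 : a ^ 2 ≤ 1)
    (hw : w ^ 2 ≤ 1) (hx : 0 < x) (h : √(uniformizationDelta a w) * d = -(1 - w ^ 2) / x) :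
    x * d ≤ -(1 - w ^ 2) := by
  set s := √(uniformizationDelta a w)
  have hs0 : 0 < s := Real.sqrt_pos.2 ((sq_pos_of_ne_zero ha0).trans_le
    (sq_le_uniformizationDelta w ha1))
  have hs1 : s ≤ 1 := Real.sqrt_le_one.2 (uniformizationDelta_le_one ha1 hw)
  have hsxd : s * (x * d) = -(1 - w ^ 2) := by
    rw [mul_left_comm, h]
    field_simp
  have hxd : x * d ≤ 0 := by nlinarith
  calc x * d ≤ s * (x * d) := by nlinarith
    _ = -(1 - w ^ 2) := hsxd

/-- A first integral of the round sphere's equation `x w' = -(1 - w²)`. -/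
noncomputable def roundInvariant (w : ℝ → ℝ) (x : ℝ) : ℝ :=
  (1 - w x) / ((1 + w x) * x ^ 2)

lemma hasDerivAt_roundInvariant {w : ℝ → ℝ} {w' x : ℝ} (hw : HasDerivAt w w' x)
    (h1 : 1 + w x ≠ 0) (hx : x ≠ 0) :
    HasDerivAt (roundInvariant w) (-2 * (x * w' + (1 - w x ^ 2)) / ((1 + w x) ^ 2 * x ^ 3)) x := by
  have h := ((hasDerivAt_const x 1).sub hw).div
    (((hasDerivAt_const x 1).add hw).mul (hasDerivAt_pow 2 x)) (mul_ne_zero h1 (pow_ne_zero 2 hx))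
  refine h.congr_deriv ?_
  simp only [Pi.add_apply, Pi.sub_apply, Pi.mul_apply, Nat.cast_ofNat]
  field_simp
  ring

lemma monotoneOn_roundInvariant {w : ℝ → ℝ} {y b : ℝ} (hy : 0 < y)
    (hcont : ContinuousOn w (Icc y b)) (hdiff : ∀ x ∈ Ioo y b, DifferentiableAt ℝ w x)
    (hw : ∀ x ∈ Icc y b, 0 < 1 + w x)
    (hsub : ∀ x ∈ Ioo y b, x * deriv w x ≤ -(1 - w x ^ 2)) :
    MonotoneOn (roundInvariant w) (Icc y b) := by
  have hpos : ∀ x ∈ Icc y b, 0 < x := fun x hx => hy.trans_le hx.1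
  refine monotoneOn_of_hasDerivWithinAt_nonneg (convex_Icc y b)
    (f' := fun x => -2 * (x * deriv w x + (1 - w x ^ 2)) / ((1 + w x) ^ 2 * x ^ 3)) ?_ ?_ ?_
  · exact (continuousOn_const.sub hcont).div ((continuousOn_const.add hcont).mul
      (continuousOn_pow 2)) fun x hx => (mul_pos (hw x hx) (pow_pos (hpos x hx) 2)).ne'
  · rw [interior_Icc]
    intro x hx
    have hx' := Ioo_subset_Icc_self hx
    exact (hasDerivAt_roundInvariant (hdiff x hx).hasDerivAt (hw x hx').ne'
      (hpos x hx').ne').hasDerivWithinAt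
  · rw [interior_Icc]
    intro x hx
    have hx0 := hpos x (Ioo_subset_Icc_self hx)
    exact div_nonneg (by linarith [hsub x hx]) (by positivity)

lemma roundInvariant_le_one_iff {w : ℝ → ℝ} {y : ℝ} (hy : y ≠ 0) (hw : 0 < 1 + w y) :
    roundInvariant w y ≤ 1 ↔ (1 - y ^ 2) / (1 + y ^ 2) ≤ w y := by
  rw [roundInvariant, div_le_one (by positivity), div_le_iff₀ (by positivity)]
  constructor <;> intro h <;> linarith

/-- For `0 < a ≤ 1`, a solution of the uniformization ODE with `0 ≤ w ≤ 1` and `w 1 = 0`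
satisfies `w(y) ≥ (1-y²)/(1+y²)` on `(0,1]`. -/
theorem stmt_3 (a : ℝ) (ha0 : 0 < a) (ha1 : a ≤ 1) (w : ℝ → ℝ)
    (hcont : ContinuousOn w (Set.Ioc (0:ℝ) 1))
    (hdiff : ∀ x ∈ Set.Ioo (0:ℝ) 1, DifferentiableAt ℝ w x)
    (hbound : ∀ x ∈ Set.Ioc (0:ℝ) 1, 0 ≤ w x ∧ w x ≤ 1)
    (hode : ∀ x ∈ Set.Ioo (0:ℝ) 1,
      Real.sqrt ((1 - a^2) * (w x)^2 + a^2) * deriv w x = -(1 - (w x)^2) / x)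
    (hw1 : w 1 = 0) :
    ∀ y ∈ Set.Ioc (0:ℝ) 1, (1 - y^2) / (1 + y^2) ≤ w y := by
  rintro y ⟨hy0, hy1⟩
  have hIcc : Icc y 1 ⊆ Ioc 0 1 := fun x hx => ⟨hy0.trans_le hx.1, hx.2⟩
  have hIoo : Ioo y 1 ⊆ Ioo 0 1 := fun x hx => ⟨hy0.trans hx.1, hx.2⟩
  have ha : a ^ 2 ≤ 1 := pow_le_one₀ ha0.le ha1
  have hw_pos : ∀ x ∈ Ioc 0 1, 0 < 1 + w x := fun x hx => by linarith [(hbound x hx).1]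
  have hw_sq : ∀ x ∈ Ioc 0 1, w x ^ 2 ≤ 1 := fun x hx =>
    pow_le_one₀ (hbound x hx).1 (hbound x hx).2
  have hsub : ∀ x ∈ Ioo y 1, x * deriv w x ≤ -(1 - w x ^ 2) := fun x hx =>
    mul_le_of_sqrt_uniformizationDelta_mul_eq ha0.ne' ha
      (hw_sq x (Ioo_subset_Ioc_self (hIoo hx))) (hIoo hx).1 (hode x (hIoo hx))
  have hmono : MonotoneOn (roundInvariant w) (Icc y 1) :=
    monotoneOn_roundInvariant hy0 (hcont.mono hIcc) (fun x hx => hdiff x (hIoo hx))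
      (fun x hx => hw_pos x (hIcc hx)) hsub
  have hy : roundInvariant w y ≤ roundInvariant w 1 :=
    hmono ⟨le_rfl, hy1⟩ ⟨hy1, le_rfl⟩ hy1
  rw [show roundInvariant w 1 = 1 by simp [roundInvariant, hw1]] at hy
  exact (roundInvariant_le_one_iff hy0.ne' (hw_pos y ⟨hy0, hy1⟩)).1 hy
end

section
/- Let a ≥ 1. Suppose w : (0,1] → ℝ is continuous, differentiable on (0,1), satisfies 0 ≤ w(x) ≤ 1 for all x ∈ (0,1], solves √(Δ_a(w(x)))·w'(x) = −(1−w(x)²)/x on (0,1), and w(1) = 0. Then (1−y^{2/a})/(1+y^{2/a}) ≤ w(y) ≤ (1−y²)/(1+y²) for all y ∈ (0,1]. -/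
open Set

/-!
Put `P = (1 - w) / (1 + w)`. The ODE becomes `x P' = (2 / √Δ_a(w)) P`, and `1 ≤ √Δ_a(w) ≤ a`
pinches the rate between `2 / a` and `2`. Hence `P(x) x^(-2/a)` increases and `P(x) x^(-2)`
decreases on `(0, 1]`; since `P(1) = 1`, this gives `y² ≤ P(y) ≤ y^(2/a)`, which is the claim
after inverting the involution `t ↦ (1 - t) / (1 + t)`.
-/

noncomputable def ellipsoidDelta (a w : ℝ) : ℝ := (1 - a ^ 2) * w ^ 2 + a ^ 2

theorem one_le_sqrt_ellipsoidDelta {a w : ℝ} (ha : 1 ≤ a) (hw : w ^ 2 ≤ 1) :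
    1 ≤ √(ellipsoidDelta a w) := by
  rw [Real.one_le_sqrt, ellipsoidDelta]
  nlinarith [mul_nonneg (by nlinarith : (0:ℝ) ≤ a ^ 2 - 1) (sub_nonneg.2 hw)]

theorem sqrt_ellipsoidDelta_le {a : ℝ} (ha : 1 ≤ a) (w : ℝ) :
    √(ellipsoidDelta a w) ≤ a := by
  rw [Real.sqrt_le_left (by linarith), ellipsoidDelta]
  nlinarith [mul_nonneg (by nlinarith : (0:ℝ) ≤ a ^ 2 - 1) (sq_nonneg w)]

noncomputable def cayley (t : ℝ) : ℝ := (1 - t) / (1 + t)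

theorem cayley_le_iff {s t : ℝ} (hs : 0 < 1 + s) (ht : 0 < 1 + t) :
    cayley s ≤ t ↔ cayley t ≤ s := by
  rw [cayley, cayley, div_le_iff₀ hs, div_le_iff₀ ht]
  constructor <;> intro h <;> linarith

theorem le_cayley_iff {s t : ℝ} (hs : 0 < 1 + s) (ht : 0 < 1 + t) :
    t ≤ cayley s ↔ s ≤ cayley t := by
  rw [cayley, cayley, le_div_iff₀ hs, le_div_iff₀ ht]
  constructor <;> intro h <;> linarith

theorem hasDerivAt_cayley {t : ℝ} (ht : 1 + t ≠ 0) :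
    HasDerivAt cayley (-2 / (1 + t) ^ 2) t := by
  refine (((hasDerivAt_id t).const_sub 1).div ((hasDerivAt_id t).const_add 1) ht).congr_deriv ?_
  simp only [id]
  field_simp
  ring

theorem mul_deriv_cayley_eq {x s w w' : ℝ} (hx : x ≠ 0) (hs : s ≠ 0) (hw : 1 + w ≠ 0)
    (hode : s * w' = -(1 - w ^ 2) / x) :
    x * (-2 / (1 + w) ^ 2 * w') = 2 / s * cayley w := by
  rw [eq_div_iff hx] at hode
  rw [cayley]
  field_simp
  linear_combination -hode

theorem cayley_ode_rate_bounds {a x : ℝ} {w : ℝ → ℝ} (ha : 1 ≤ a) (hx : 0 < x)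
    (hw : w x ∈ Icc 0 1)
    (hode : √(ellipsoidDelta a (w x)) * deriv w x = -(1 - w x ^ 2) / x) :
    2 / a * cayley (w x) ≤ x * (-2 / (1 + w x) ^ 2 * deriv w x) ∧
      x * (-2 / (1 + w x) ^ 2 * deriv w x) ≤ 2 * cayley (w x) := by
  have hs := one_le_sqrt_ellipsoidDelta ha (by nlinarith [hw.1, hw.2] : w x ^ 2 ≤ 1)
  have hP : 0 ≤ cayley (w x) := div_nonneg (by linarith [hw.2]) (by linarith [hw.1])
  rw [mul_deriv_cayley_eq hx.ne' (by positivity) (by linarith [hw.1]) hode]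
  exact ⟨by gcongr; exact sqrt_ellipsoidDelta_le ha _,
    mul_le_mul_of_nonneg_right (div_le_self zero_le_two hs) hP⟩

theorem monotoneOn_mul_rpow_neg {D : Set ℝ} (hD : Convex ℝ D) (hD0 : D ⊆ Ioi 0)
    {f f' : ℝ → ℝ} {c : ℝ} (hf : ContinuousOn f D)
    (hf' : ∀ x ∈ interior D, HasDerivAt f (f' x) x)
    (hrate : ∀ x ∈ interior D, c * f x ≤ x * f' x) :
    MonotoneOn (fun x => f x * x ^ (-c)) D := by
  have hpos : ∀ x ∈ interior D, 0 < x := fun x hx => hD0 (interior_subset hx)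
  have hderiv : ∀ x ∈ interior D, HasDerivAt (fun x => f x * x ^ (-c))
      (x ^ (-c - 1) * (x * f' x - c * f x)) x := by
    intro x hx
    refine ((hf' x hx).mul
      (Real.hasDerivAt_rpow_const (p := -c) (Or.inl (hpos x hx).ne'))).congr_deriv ?_
    rw [show -c = 1 + (-c - 1) by ring, Real.rpow_add (hpos x hx), Real.rpow_one]
    ring_nf
  refine monotoneOn_of_deriv_nonneg hD
    (hf.mul (continuousOn_id.rpow_const fun x hx => Or.inl (hD0 hx).ne'))
    (fun x hx => (hderiv x hx).differentiableAt.differentiableWithinAt) fun x hx => ?_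
  rw [(hderiv x hx).deriv]
  exact mul_nonneg (Real.rpow_nonneg (hpos x hx).le _) (sub_nonneg.2 (hrate x hx))

theorem antitoneOn_mul_rpow_neg {D : Set ℝ} (hD : Convex ℝ D) (hD0 : D ⊆ Ioi 0)
    {f f' : ℝ → ℝ} {c : ℝ} (hf : ContinuousOn f D)
    (hf' : ∀ x ∈ interior D, HasDerivAt f (f' x) x)
    (hrate : ∀ x ∈ interior D, x * f' x ≤ c * f x) :
    AntitoneOn (fun x => f x * x ^ (-c)) D := by
  have := monotoneOn_mul_rpow_neg (c := c) hD hD0 hf.neg (fun x hx => (hf' x hx).neg)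
    fun x hx => by simpa using hrate x hx
  intro x hx y hy hxy
  simpa using this hx hy hxy

theorem le_mul_rpow_of_le_mul_deriv {f f' : ℝ → ℝ} {c : ℝ} (hf : ContinuousOn f (Ioc 0 1))
    (hf' : ∀ x ∈ Ioo 0 1, HasDerivAt f (f' x) x)
    (hrate : ∀ x ∈ Ioo 0 1, c * f x ≤ x * f' x)
    {y : ℝ} (hy : y ∈ Ioc 0 1) : f y ≤ f 1 * y ^ c := by
  rw [← interior_Ioc] at hf' hrate
  have : f y * y ^ (-c) ≤ f 1 * 1 ^ (-c) :=
    monotoneOn_mul_rpow_neg (convex_Ioc 0 1) Ioc_subset_Ioi_self hf hf' hrate hy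
      (right_mem_Ioc.2 zero_lt_one) hy.2
  rwa [Real.one_rpow, mul_one, Real.rpow_neg hy.1.le, ← div_eq_mul_inv,
    div_le_iff₀ (Real.rpow_pos_of_pos hy.1 c)] at this

theorem mul_rpow_le_of_mul_deriv_le {f f' : ℝ → ℝ} {c : ℝ} (hf : ContinuousOn f (Ioc 0 1))
    (hf' : ∀ x ∈ Ioo 0 1, HasDerivAt f (f' x) x)
    (hrate : ∀ x ∈ Ioo 0 1, x * f' x ≤ c * f x)
    {y : ℝ} (hy : y ∈ Ioc 0 1) : f 1 * y ^ c ≤ f y := by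
  rw [← interior_Ioc] at hf' hrate
  have : f 1 * 1 ^ (-c) ≤ f y * y ^ (-c) :=
    antitoneOn_mul_rpow_neg (convex_Ioc 0 1) Ioc_subset_Ioi_self hf hf' hrate hy
      (right_mem_Ioc.2 zero_lt_one) hy.2
  rwa [Real.one_rpow, mul_one, Real.rpow_neg hy.1.le, ← div_eq_mul_inv,
    le_div_iff₀ (Real.rpow_pos_of_pos hy.1 c)] at this

/-- For `a ≥ 1`, a solution of the uniformization ODE with `0 ≤ w ≤ 1` and `w 1 = 0`
satisfies `(1-y^(2/a))/(1+y^(2/a)) ≤ w(y) ≤ (1-y²)/(1+y²)` on `(0,1]`. -/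
theorem stmt_4 (a : ℝ) (ha : 1 ≤ a) (w : ℝ → ℝ)
    (hcont : ContinuousOn w (Set.Ioc (0:ℝ) 1))
    (hdiff : ∀ x ∈ Set.Ioo (0:ℝ) 1, DifferentiableAt ℝ w x)
    (hbound : ∀ x ∈ Set.Ioc (0:ℝ) 1, 0 ≤ w x ∧ w x ≤ 1)
    (hode : ∀ x ∈ Set.Ioo (0:ℝ) 1,
      Real.sqrt ((1 - a^2) * (w x)^2 + a^2) * deriv w x = -(1 - (w x)^2) / x)
    (hw1 : w 1 = 0) :
    ∀ y ∈ Set.Ioc (0:ℝ) 1,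
      (1 - y ^ (2 / a)) / (1 + y ^ (2 / a)) ≤ w y ∧ w y ≤ (1 - y^2) / (1 + y^2) := by
  have hw_pos : ∀ x ∈ Ioc (0:ℝ) 1, 0 < 1 + w x := fun x hx => by linarith [(hbound x hx).1]
  have hP_cont : ContinuousOn (fun x => cayley (w x)) (Ioc 0 1) :=
    (continuousOn_const.sub hcont).div (continuousOn_const.add hcont) fun x hx => (hw_pos x hx).ne'
  have hP_deriv : ∀ x ∈ Ioo (0:ℝ) 1,
      HasDerivAt (fun x => cayley (w x)) (-2 / (1 + w x) ^ 2 * deriv w x) x := fun x hx =>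
    (hasDerivAt_cayley (hw_pos x (Ioo_subset_Ioc_self hx)).ne').comp x (hdiff x hx).hasDerivAt
  have hrate := fun x (hx : x ∈ Ioo (0:ℝ) 1) =>
    cayley_ode_rate_bounds ha hx.1 (hbound x (Ioo_subset_Ioc_self hx)) (hode x hx)
  have hP_one : cayley (w 1) = 1 := by simp [cayley, hw1]
  intro y hy
  constructor
  · rw [← cayley, cayley_le_iff (add_pos one_pos (Real.rpow_pos_of_pos hy.1 _)) (hw_pos y hy)]
    simpa [hP_one] using
      le_mul_rpow_of_le_mul_deriv hP_cont hP_deriv (fun x hx => (hrate x hx).1) hy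
  · have := mul_rpow_le_of_mul_deriv_le hP_cont hP_deriv (fun x hx => (hrate x hx).2) hy
    rw [hP_one, one_mul, Real.rpow_two] at this
    rwa [← cayley, le_cayley_iff (by positivity) (hw_pos y hy)]
end

section
/- Let β > 1/2. Then a² · ∫₀¹ (Δ_a(w)+1)² · Δ_a(w)^{2β−5/2} dw tends to 0 as a → 0⁺, where Δ_a(w) = (1−a²)·w² + a². (Up to a factor π, this integral equals ∫_{E(a)} H² f_β² dE(a), where H is the mean curvature of the ellipsoid E(a) and f_β = Δ_a^β.) -/
open Filter Set intervalIntegral MeasureTheory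

set_option maxHeartbeats 2000000 in
/-- `a² · ∫₀¹ (Δ_a(w)+1)² · Δ_a(w)^(2β-5/2) dw → 0` as `a → 0⁺`, for `β > 1/2`,
where `Δ_a(w) = (1-a²)w² + a²`. -/
theorem stmt_5 (β : ℝ) (hβ : 1/2 < β) :
    Filter.Tendsto
      (fun a : ℝ => a^2 *
        ∫ w in (0:ℝ)..1,
          ((1 - a^2) * w^2 + a^2 + 1)^2 * ((1 - a^2) * w^2 + a^2) ^ (2*β - 5/2))
      (nhdsWithin 0 (Set.Ioi 0)) (nhds 0) := by
  set t : ℝ := min (2*β - 1) (1/2) with ht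
  have ht0 : 0 < t := lt_min (by linarith) (by norm_num)
  have ht1 : t ≤ 1/2 := min_le_right _ _
  have ht2 : t ≤ 2*β - 1 := min_le_left _ _
  set u : ℝ := 1/2 - t/3 with hu
  have hu0 : 0 < u := by rw [hu]; linarith
  have hu12 : u < 1/2 := by rw [hu]; linarith
  have hup : -(3*u) ≤ 2*β - 5/2 := by rw [hu]; linarith
  set c : ℝ := 4 / (1 - 2*u) with hc
  clear_value t u c
  apply squeeze_zero' (g := fun a => a ^ (2 - 4*u) * (1 - a^2) ^ (-u) * c)
  · -- eventual nonnegativity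
    filter_upwards [Ioo_mem_nhdsGT_of_mem (by norm_num : (0:ℝ) ∈ Ico 0 1)] with a ha
    refine mul_nonneg (sq_nonneg a) (intervalIntegral.integral_nonneg zero_le_one fun w hw => ?_)
    refine mul_nonneg (sq_nonneg _) (Real.rpow_nonneg ?_ _)
    have h1 : (0:ℝ) ≤ a^2 * (1 - w^2) :=
      mul_nonneg (sq_nonneg a) (by nlinarith [hw.1, hw.2] : (0:ℝ) ≤ 1 - w^2)
    nlinarith [sq_nonneg w]
  · -- eventual upper bound
    filter_upwards [Ioo_mem_nhdsGT_of_mem (by norm_num : (0:ℝ) ∈ Ico 0 1)] with a ha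
    obtain ⟨ha0, ha1⟩ := ha
    have h1a : 0 < 1 - a^2 := by nlinarith
    set C : ℝ := 4 * (a^4*(1-a^2))^(-u) with hC
    clear_value C
    have hXpos : 0 < a^4*(1-a^2) := by positivity
    -- integrability of f
    have hbc : Continuous fun w : ℝ => (1 - a^2) * w^2 + a^2 := by continuity
    have hfc : Continuous fun w : ℝ =>
        ((1 - a^2) * w^2 + a^2 + 1)^2 * ((1 - a^2) * w^2 + a^2) ^ (2*β - 5/2) := by
      refine ((hbc.add continuous_const).pow 2).mul (hbc.rpow_const fun w => Or.inl ?_)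
      have : 0 ≤ (1 - a^2) * w^2 := by positivity
      positivity
    have hint_f : IntervalIntegrable (fun w : ℝ =>
        ((1 - a^2) * w^2 + a^2 + 1)^2 * ((1 - a^2) * w^2 + a^2) ^ (2*β - 5/2)) volume 0 1 :=
      hfc.intervalIntegrable 0 1
    have hint_g : IntervalIntegrable (fun w => C * w ^ (-(2*u))) volume 0 1 :=
      (intervalIntegral.intervalIntegrable_rpow' (by linarith)).const_mul C
    -- pointwise ae bound
    have hae : (fun w => ((1 - a^2) * w^2 + a^2 + 1)^2 * ((1 - a^2) * w^2 + a^2) ^ (2*β - 5/2))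
        ≤ᵐ[volume.restrict (Icc (0:ℝ) 1)] fun w => C * w ^ (-(2*u)) := by
      have hne : ∀ᵐ w ∂(volume.restrict (Icc (0:ℝ) 1)), w ≠ 0 := by
        refine MeasureTheory.ae_restrict_of_ae ?_
        rw [MeasureTheory.ae_iff]
        simp only [ne_eq, not_not]
        simpa using Real.volume_singleton (a := 0)
      filter_upwards [MeasureTheory.ae_restrict_mem measurableSet_Icc, hne] with w hwm hw0
      have hw : 0 < w := lt_of_le_of_ne hwm.1 (Ne.symm hw0)
      have hw1 : w ≤ 1 := hwm.2
      set Δ : ℝ := (1 - a^2) * w^2 + a^2 with hΔ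
      clear_value Δ
      have hΔ0 : 0 < Δ := by
        rw [hΔ]; nlinarith [mul_nonneg h1a.le (sq_nonneg w), pow_pos ha0 2]
      have hΔ1 : Δ ≤ 1 := by
        rw [hΔ]; nlinarith [mul_nonneg h1a.le (sub_nonneg.2 (by nlinarith [hw] : w^2 ≤ 1))]
      have step1 : Δ ^ (2*β - 5/2) ≤ Δ ^ (-(3*u)) :=
        Real.rpow_le_rpow_of_exponent_ge hΔ0 hΔ1 hup
      have h1 : a^2 ≤ Δ := by rw [hΔ]; nlinarith [mul_nonneg h1a.le (sq_nonneg w)]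
      have h2 : (1-a^2)*w^2 ≤ Δ := by rw [hΔ]; nlinarith [pow_pos ha0 2]
      have hb3 : a^4*(1-a^2)*w^2 ≤ Δ^(3:ℕ) := by
        have hA : a^2*a^2 ≤ Δ*Δ := mul_le_mul h1 h1 (sq_nonneg a) hΔ0.le
        have hB : (a^2*a^2)*((1-a^2)*w^2) ≤ (Δ*Δ)*Δ :=
          mul_le_mul hA h2 (mul_nonneg h1a.le (sq_nonneg w)) (mul_nonneg hΔ0.le hΔ0.le)
        calc a^4*(1-a^2)*w^2 = (a^2*a^2)*((1-a^2)*w^2) := by ring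
          _ ≤ (Δ*Δ)*Δ := hB
          _ = Δ^(3:ℕ) := by ring
      have step2 : Δ ^ (-(3*u)) ≤ (a^4*(1-a^2)*w^2) ^ (-u) := by
        have e1 : Δ ^ (-(3*u)) = (Δ^(3:ℕ)) ^ (-u) := by
          rw [← Real.rpow_natCast Δ 3, ← Real.rpow_mul hΔ0.le]
          norm_num
        rw [e1]
        exact Real.rpow_le_rpow_of_nonpos (by positivity) hb3 (by linarith)
      have step3 : (a^4*(1-a^2)*w^2) ^ (-u) = (a^4*(1-a^2))^(-u) * w ^ (-(2*u)) := by
        rw [Real.mul_rpow hXpos.le (sq_nonneg w)]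
        congr 1
        rw [← Real.rpow_natCast w 2, ← Real.rpow_mul hw.le]
        norm_num
      have hsq : (Δ + 1)^2 ≤ 4 := by nlinarith
      calc (Δ + 1)^2 * Δ ^ (2*β - 5/2)
          ≤ 4 * ((a^4*(1-a^2))^(-u) * w ^ (-(2*u))) := by
            refine mul_le_mul hsq ?_ (Real.rpow_nonneg hΔ0.le _) (by norm_num)
            calc Δ ^ (2*β - 5/2) ≤ Δ ^ (-(3*u)) := step1
              _ ≤ (a^4*(1-a^2)*w^2) ^ (-u) := step2
              _ = (a^4*(1-a^2))^(-u) * w ^ (-(2*u)) := step3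
        _ = C * w ^ (-(2*u)) := by rw [hC]; ring
    have hmono := intervalIntegral.integral_mono_ae_restrict zero_le_one hint_f hint_g hae
    have hgval : (∫ w in (0:ℝ)..1, C * w ^ (-(2*u))) = C * (1/(1 - 2*u)) := by
      rw [intervalIntegral.integral_const_mul, integral_rpow (Or.inl (by linarith))]
      rw [Real.one_rpow, Real.zero_rpow (by linarith : -(2*u) + 1 ≠ 0)]
      ring_nf
    -- now assemble
    have key : a^2 * (C * (1/(1 - 2*u))) = a ^ (2 - 4*u) * (1 - a^2) ^ (-u) * c := by
      rw [hC, hc]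
      have e1 : (a^4*(1-a^2))^(-u) = a^(-(4*u)) * (1-a^2)^(-u) := by
        rw [Real.mul_rpow (by positivity) h1a.le]
        congr 1
        rw [← Real.rpow_natCast a 4, ← Real.rpow_mul ha0.le]
        norm_num
      have e2 : a^2 * a^(-(4*u)) = a^(2 - 4*u) := by
        rw [← Real.rpow_natCast a 2, ← Real.rpow_add ha0]
        norm_num
        ring_nf
      rw [e1]
      rw [show a^2 * (4 * (a^(-(4*u)) * (1-a^2)^(-u)) * (1/(1-2*u)))
          = (a^2 * a^(-(4*u))) * (1-a^2)^(-u) * (4/(1-2*u)) by ring, e2]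
    calc a^2 * ∫ w in (0:ℝ)..1,
          ((1 - a^2) * w^2 + a^2 + 1)^2 * ((1 - a^2) * w^2 + a^2) ^ (2*β - 5/2)
        ≤ a^2 * ∫ w in (0:ℝ)..1, C * w ^ (-(2*u)) :=
          mul_le_mul_of_nonneg_left hmono (sq_nonneg a)
      _ = a ^ (2 - 4*u) * (1 - a^2) ^ (-u) * c := by rw [hgval, key]
  · -- the bound tends to 0
    have l1 : Tendsto (fun a : ℝ => a ^ (2 - 4*u)) (nhdsWithin 0 (Set.Ioi 0)) (nhds 0) := by
      have hcont : ContinuousAt (fun a : ℝ => a ^ (2 - 4*u)) 0 :=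
        Real.continuousAt_rpow_const 0 _ (Or.inr (by linarith))
      have h := hcont.tendsto.mono_left (nhdsWithin_le_nhds (s := Set.Ioi (0:ℝ)))
      simpa [Real.zero_rpow (ne_of_gt (by linarith : (0:ℝ) < 2 - 4*u))] using h
    have l2 : Tendsto (fun a : ℝ => (1 - a^2) ^ (-u)) (nhdsWithin 0 (Set.Ioi 0)) (nhds 1) := by
      have hcont : ContinuousAt (fun a : ℝ => (1 - a^2) ^ (-u)) 0 := by
        refine ContinuousAt.rpow_const (by fun_prop) (Or.inl ?_)
        norm_num
      have h := hcont.tendsto.mono_left (nhdsWithin_le_nhds (s := Set.Ioi (0:ℝ)))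
      simpa using h
    simpa using (l1.mul l2).mul_const c
end

section
/- Let β > 1/2. Then the Rayleigh-quotient expression [ (a²/4)·∫₀¹ (Δ_a(w)+1)²·Δ_a(w)^{2β−5/2} dw + 4β²·(1−a²)²·∫₀¹ Δ_a(w)^{2β−5/2}·w²·(1−w²) dw ] / ∫₀¹ Δ_a(w)^{2β+1/2} dw tends to 2β(2β+1)/(2β−1) as a → 0⁺, where Δ_a(w) = (1−a²)·w² + a². -/
/-!
For fixed `w ∈ (0, 1]`, `Δ_a(w) → w²` as `a → 0`, so by dominated convergence the three integrals
tend to `∫₀¹ w^(4β+1) = 1/(4β+2)`, `∫₀¹ w^(4β-3) (1 - w²) = 1/(4β-2) - 1/(4β)` and `0`.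
Domination comes from `w² ≤ Δ_a(w) ≤ 1`, which gives `Δ_a(w)^s ≤ w^(2s) + 1`. The factors `w²` and
`a²` in front of the singular power `Δ_a(w)^(2β-5/2)` are both at most `Δ_a(w)`, so every integrand
is bounded by `Δ_a(w)^s` with `s = 2β + 1/2` or `s = 2β - 3/2`, and `w^(2s)` is integrable on
`(0, 1]` precisely because `β > 1/2`. Only `a²` enters, so all limits can be taken as `a → 0`.
-/

open Filter Set intervalIntegral MeasureTheory Topology

lemma rpow_le_rpow_add_one_of_le_one {x y : ℝ} (hy : 0 < y) (hyx : y ≤ x) (hx : x ≤ 1) (r : ℝ) :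
    x ^ r ≤ y ^ r + 1 := by
  rcases le_or_gt 0 r with hr | hr
  · linarith [Real.rpow_le_one (hy.le.trans hyx) hx hr, Real.rpow_nonneg hy.le r]
  · linarith [Real.rpow_le_rpow_of_nonpos hy hyx hr.le]

lemma mul_rpow_le_rpow_add_one {c x : ℝ} (hx : 0 < x) (hcx : c ≤ x) (q : ℝ) :
    c * x ^ q ≤ x ^ (q + 1) := by
  rw [Real.rpow_add_one hx.ne', mul_comm]
  exact mul_le_mul_of_nonneg_left hcx (Real.rpow_nonneg hx.le q)

lemma integral_rpow_zero_one {r : ℝ} (hr : -1 < r) :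
    ∫ w in (0:ℝ)..1, w ^ r = 1 / (r + 1) := by
  rw [integral_rpow (Or.inl hr), Real.one_rpow, Real.zero_rpow (by linarith)]
  ring

theorem tendsto_integral_zero_one_of_le_rpow_add_one {ι : Type*} {l : Filter ι}
    [l.IsCountablyGenerated] {F : ι → ℝ → ℝ} {f : ℝ → ℝ} {p : ℝ} (hp : -1 < p)
    (hF : ∀ᶠ i in l, AEStronglyMeasurable (F i) (volume.restrict (Ioc 0 1)))
    (hbound : ∀ᶠ i in l, ∀ w ∈ Ioc (0:ℝ) 1, ‖F i w‖ ≤ w ^ p + 1)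
    (hlim : ∀ w ∈ Ioc (0:ℝ) 1, Tendsto (fun i => F i w) l (𝓝 (f w))) :
    Tendsto (fun i => ∫ w in (0:ℝ)..1, F i w) l (𝓝 (∫ w in (0:ℝ)..1, f w)) := by
  have hI : uIoc (0:ℝ) 1 = Ioc 0 1 := uIoc_of_le zero_le_one
  refine tendsto_integral_filter_of_dominated_convergence (fun w => w ^ p + 1) ?_ ?_ ?_ ?_
  · rwa [hI]
  · exact hbound.mono fun i h => ae_of_all _ fun w hw => h w (hI ▸ hw)
  · exact (intervalIntegrable_rpow' hp).add intervalIntegrable_const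
  · exact ae_of_all _ fun w hw => hlim w (hI ▸ hw)

def Δ (a w : ℝ) : ℝ := (1 - a ^ 2) * w ^ 2 + a ^ 2

@[fun_prop]
lemma measurable_Δ (a : ℝ) : Measurable (Δ a) := by
  unfold Δ; fun_prop

section Bounds

variable {a w : ℝ}

lemma sq_le_Δ (hw : w ^ 2 ≤ 1) : w ^ 2 ≤ Δ a w := by
  unfold Δ; nlinarith [sq_nonneg a]

lemma sq_le_Δ_left (ha : a ^ 2 ≤ 1) : a ^ 2 ≤ Δ a w := by
  unfold Δ; nlinarith [sq_nonneg w]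

lemma Δ_le_one (ha : a ^ 2 ≤ 1) (hw : w ^ 2 ≤ 1) : Δ a w ≤ 1 := by
  unfold Δ; nlinarith

lemma Δ_pos (hw : w ∈ Ioc (0:ℝ) 1) : 0 < Δ a w :=
  (pow_pos hw.1 2).trans_le (sq_le_Δ (pow_le_one₀ hw.1.le hw.2))

lemma Δ_rpow_le (ha : a ^ 2 ≤ 1) (hw : w ∈ Ioc (0:ℝ) 1) (r : ℝ) :
    Δ a w ^ r ≤ w ^ (2 * r) + 1 := by
  have hw2 : w ^ 2 ≤ 1 := pow_le_one₀ hw.1.le hw.2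
  have h := rpow_le_rpow_add_one_of_le_one (pow_pos hw.1 2) (sq_le_Δ hw2) (Δ_le_one ha hw2) r
  rwa [← Real.rpow_two, ← Real.rpow_mul hw.1.le] at h

end Bounds

lemma eventually_sq_le_one : ∀ᶠ a : ℝ in 𝓝 0, a ^ 2 ≤ 1 :=
  ((continuous_pow 2).tendsto' 0 0 (zero_pow two_ne_zero)).eventually (eventually_le_nhds one_pos)

lemma tendsto_Δ (w : ℝ) : Tendsto (fun a => Δ a w) (𝓝 0) (𝓝 (w ^ 2)) := by
  simpa [Δ] using ((by unfold Δ; fun_prop : Continuous fun a : ℝ => Δ a w).tendsto 0)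

lemma tendsto_Δ_rpow {w : ℝ} (hw : 0 < w) (r : ℝ) :
    Tendsto (fun a => Δ a w ^ r) (𝓝 0) (𝓝 (w ^ (2 * r))) := by
  rw [Real.rpow_mul hw.le, Real.rpow_two]
  exact (tendsto_Δ w).rpow_const (Or.inl (by positivity))

lemma tendsto_integral_Δ_rpow {r : ℝ} (hr : -1 / 2 < r) :
    Tendsto (fun a => ∫ w in (0:ℝ)..1, Δ a w ^ r) (𝓝 0) (𝓝 (1 / (2 * r + 1))) := by
  rw [← integral_rpow_zero_one (r := 2 * r) (by linarith)]
  refine tendsto_integral_zero_one_of_le_rpow_add_one (p := 2 * r) (by linarith)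
    (.of_forall fun a => ((measurable_Δ a).pow_const r).aestronglyMeasurable) ?_
    fun w hw => tendsto_Δ_rpow hw.1 r
  filter_upwards [eventually_sq_le_one] with a ha w hw
  rw [Real.norm_of_nonneg (Real.rpow_nonneg (Δ_pos hw).le r)]
  exact Δ_rpow_le ha hw r

lemma tendsto_integral_Δ_rpow_mul_sq_mul_one_sub_sq {q : ℝ} (hq : -3 / 2 < q) :
    Tendsto (fun a => ∫ w in (0:ℝ)..1, Δ a w ^ q * w ^ 2 * (1 - w ^ 2)) (𝓝 0)
      (𝓝 (1 / (2 * q + 3) - 1 / (2 * q + 5))) := by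
  have h3 := integral_rpow_zero_one (r := 2 * q + 2) (by linarith)
  have h5 := integral_rpow_zero_one (r := 2 * q + 4) (by linarith)
  rw [show 2 * q + 2 + 1 = 2 * q + 3 by ring] at h3
  rw [show 2 * q + 4 + 1 = 2 * q + 5 by ring] at h5
  rw [← h3, ← h5, ← integral_sub (intervalIntegrable_rpow' (by linarith))
    (intervalIntegrable_rpow' (by linarith))]
  refine tendsto_integral_zero_one_of_le_rpow_add_one (p := 2 * (q + 1)) (by linarith)
    (.of_forall fun a => by fun_prop) ?_ fun w hw => ?_
  · filter_upwards [eventually_sq_le_one] with a ha w hw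
    have hw2 : w ^ 2 ≤ 1 := pow_le_one₀ hw.1.le hw.2
    have hΔq := Real.rpow_nonneg (Δ_pos (a := a) hw).le q
    rw [Real.norm_of_nonneg (by have := sub_nonneg.2 hw2; positivity)]
    calc Δ a w ^ q * w ^ 2 * (1 - w ^ 2) ≤ w ^ 2 * Δ a w ^ q := by
          nlinarith [mul_nonneg hΔq (sq_nonneg w)]
      _ ≤ Δ a w ^ (q + 1) := mul_rpow_le_rpow_add_one (Δ_pos hw) (sq_le_Δ hw2) q
      _ ≤ w ^ (2 * (q + 1)) + 1 := Δ_rpow_le ha hw _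
  · have hpow : w ^ (2 * q + 2) - w ^ (2 * q + 4) = w ^ (2 * q) * w ^ 2 * (1 - w ^ 2) := by
      rw [Real.rpow_add hw.1, Real.rpow_add hw.1, Real.rpow_two, Real.rpow_ofNat]
      ring
    rw [hpow]
    exact ((tendsto_Δ_rpow hw.1 q).mul_const _).mul_const _

lemma tendsto_sq_mul_integral_Δ_rpow {q : ℝ} (hq : -3 / 2 < q) :
    Tendsto (fun a => a ^ 2 / 4 * ∫ w in (0:ℝ)..1, (Δ a w + 1) ^ 2 * Δ a w ^ q) (𝓝 0)
      (𝓝 0) := by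
  simp_rw [← intervalIntegral.integral_const_mul]
  have key := tendsto_integral_zero_one_of_le_rpow_add_one (l := 𝓝 0)
    (F := fun a w => a ^ 2 / 4 * ((Δ a w + 1) ^ 2 * Δ a w ^ q)) (f := fun _ => 0)
    (p := 2 * (q + 1)) (by linarith) (.of_forall fun a => by fun_prop) ?bound fun w hw => ?lim
  · rwa [intervalIntegral.integral_zero] at key
  case bound =>
    filter_upwards [eventually_sq_le_one] with a ha w hw
    have hΔ := Δ_pos (a := a) hw
    have hΔ1 := Δ_le_one ha (pow_le_one₀ hw.1.le hw.2)
    rw [Real.norm_of_nonneg (by positivity)]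
    calc a ^ 2 / 4 * ((Δ a w + 1) ^ 2 * Δ a w ^ q) ≤ a ^ 2 / 4 * (4 * Δ a w ^ q) := by
          gcongr; nlinarith
      _ = a ^ 2 * Δ a w ^ q := by ring
      _ ≤ Δ a w ^ (q + 1) := mul_rpow_le_rpow_add_one hΔ (sq_le_Δ_left ha) q
      _ ≤ w ^ (2 * (q + 1)) + 1 := Δ_rpow_le ha hw _
  case lim =>
    have ha : Tendsto (fun a : ℝ => a ^ 2 / 4) (𝓝 0) (𝓝 0) := by
      simpa using ((by fun_prop : Continuous fun a : ℝ => a ^ 2 / 4).tendsto 0)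
    simpa using ha.mul ((((tendsto_Δ w).add_const 1).pow 2).mul (tendsto_Δ_rpow hw.1 q))

/-- The Rayleigh-quotient expression tends to `2β(2β+1)/(2β-1)` as `a → 0⁺`, for `β > 1/2`. -/
theorem stmt_8 (β : ℝ) (hβ : 1/2 < β) :
    Filter.Tendsto
      (fun a : ℝ =>
        (a^2/4 *
            (∫ w in (0:ℝ)..1,
              ((1 - a^2) * w^2 + a^2 + 1)^2 * ((1 - a^2) * w^2 + a^2) ^ (2*β - 5/2)) +
          4 * β^2 * (1 - a^2)^2 *
            (∫ w in (0:ℝ)..1,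
              ((1 - a^2) * w^2 + a^2) ^ (2*β - 5/2) * w^2 * (1 - w^2))) /
        (∫ w in (0:ℝ)..1, ((1 - a^2) * w^2 + a^2) ^ (2*β + 1/2)))
      (nhdsWithin 0 (Set.Ioi 0)) (nhds (2 * β * (2*β + 1) / (2*β - 1))) := by
  have hA := tendsto_sq_mul_integral_Δ_rpow (q := 2 * β - 5 / 2) (by linarith)
  have hB := tendsto_integral_Δ_rpow_mul_sq_mul_one_sub_sq (q := 2 * β - 5 / 2) (by linarith)
  have hD := tendsto_integral_Δ_rpow (r := 2 * β + 1 / 2) (by linarith)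
  have hc : Tendsto (fun a : ℝ => 4 * β ^ 2 * (1 - a ^ 2) ^ 2) (𝓝 0) (𝓝 (4 * β ^ 2)) := by
    simpa using ((by fun_prop : Continuous fun a : ℝ => 4 * β ^ 2 * (1 - a ^ 2) ^ 2).tendsto 0)
  have hlim := (hA.add (hc.mul hB)).div hD (by positivity)
  have hval : (0 + 4 * β ^ 2 * (1 / (2 * (2 * β - 5 / 2) + 3) - 1 / (2 * (2 * β - 5 / 2) + 5)))
      / (1 / (2 * (2 * β + 1 / 2) + 1)) = 2 * β * (2 * β + 1) / (2 * β - 1) := by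
    rw [show 2 * (2 * β - 5 / 2) + 3 = 2 * (2 * β - 1) by ring,
      show 2 * (2 * β - 5 / 2) + 5 = 4 * β by ring,
      show 2 * (2 * β + 1 / 2) + 1 = 2 * (2 * β + 1) by ring]
    have hβ₁ : β * 2 - 1 ≠ 0 := by linarith
    have hβ₀ : β ≠ 0 := by linarith
    field_simp
    ring
  rw [hval] at hlim
  exact hlim.mono_left nhdsWithin_le_nhds
end

section
/- Let β > 1/2. Then (1−a²)² · ∫₀¹ Δ_a(w)^{2β−5/2}·w²·(1−w²) dw / ∫₀¹ Δ_a(w)^{2β+1/2} dw tends to 0 as a → ∞, where Δ_a(w) = (1−a²)·w² + a². (This quotient equals, up to the factor 4β², the ratio ∫_{E(a)} |grad f_β|² dE(a) / ∫_{E(a)} f_β² dE(a) for f_β = Δ_a^β.) -/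
set_option maxHeartbeats 1000000

open Filter Set intervalIntegral MeasureTheory


lemma aux_intInt (a r : ℝ) (ha : 2 ≤ a) :
    IntervalIntegrable (fun w : ℝ => ((1 - a^2) * w^2 + a^2) ^ r) volume 0 1 := by
  apply ContinuousOn.intervalIntegrable
  apply ContinuousOn.rpow_const (by fun_prop)
  intro w hw
  rw [Set.uIcc_of_le (by norm_num : (0:ℝ) ≤ 1)] at hw
  left
  have h1 : w^2 ≤ 1 := by nlinarith [hw.1, hw.2]
  nlinarith [mul_nonneg (show (0:ℝ) ≤ a^2-1 by nlinarith) (show (0:ℝ) ≤ 1-w^2 by linarith)]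

lemma aux_intInt2 (a r : ℝ) (ha : 2 ≤ a) :
    IntervalIntegrable (fun w : ℝ => ((1 - a^2) * w^2 + a^2) ^ r * w^2 * (1 - w^2)) volume 0 1 := by
  apply ContinuousOn.intervalIntegrable
  apply ContinuousOn.mul (ContinuousOn.mul ?_ (by fun_prop)) (by fun_prop)
  apply ContinuousOn.rpow_const (by fun_prop)
  intro w hw
  rw [Set.uIcc_of_le (by norm_num : (0:ℝ) ≤ 1)] at hw
  left
  have h1 : w^2 ≤ 1 := by nlinarith [hw.1, hw.2]
  nlinarith [mul_nonneg (show (0:ℝ) ≤ a^2-1 by nlinarith) (show (0:ℝ) ≤ 1-w^2 by linarith)]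

lemma aux_denom (β a : ℝ) (hβ : 1/2 < β) (ha : 2 ≤ a) :
    1/2 * ((3/4) * a^2) ^ (2*β + 1/2) ≤
      ∫ w in (0:ℝ)..1, ((1 - a^2) * w^2 + a^2) ^ (2*β + 1/2) := by
  have hs0 : (0:ℝ) ≤ 2*β + 1/2 := by linarith
  have hii := aux_intInt a (2*β + 1/2) ha
  have hi1 : IntervalIntegrable (fun w : ℝ => ((1 - a^2) * w^2 + a^2) ^ (2*β + 1/2)) volume 0 (1/2) :=
    hii.mono_set (by rw [Set.uIcc_of_le (by norm_num : (0:ℝ) ≤ 1/2), Set.uIcc_of_le (by norm_num : (0:ℝ) ≤ 1)]; exact Set.Icc_subset_Icc le_rfl (by norm_num))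
  have hi2 : IntervalIntegrable (fun w : ℝ => ((1 - a^2) * w^2 + a^2) ^ (2*β + 1/2)) volume (1/2) 1 :=
    hii.mono_set (by rw [Set.uIcc_of_le (by norm_num : (1/2:ℝ) ≤ 1), Set.uIcc_of_le (by norm_num : (0:ℝ) ≤ 1)]; exact Set.Icc_subset_Icc (by norm_num) le_rfl)
  rw [← integral_add_adjacent_intervals hi1 hi2]
  have h2 : (0:ℝ) ≤ ∫ w in (1/2:ℝ)..1, ((1 - a^2) * w^2 + a^2) ^ (2*β + 1/2) := by
    apply intervalIntegral.integral_nonneg (by norm_num)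
    intro u hu
    apply Real.rpow_nonneg
    nlinarith [mul_nonneg (sq_nonneg a) (show (0:ℝ) ≤ 1-u^2 by nlinarith [hu.1, hu.2])]
  have h1 : 1/2 * ((3/4) * a^2) ^ (2*β + 1/2) ≤ ∫ w in (0:ℝ)..(1/2), ((1 - a^2) * w^2 + a^2) ^ (2*β + 1/2) := by
    have hc : (∫ _ in (0:ℝ)..(1/2), ((3/4) * a^2) ^ (2*β + 1/2)) = 1/2 * ((3/4) * a^2) ^ (2*β + 1/2) := by
      rw [intervalIntegral.integral_const]; norm_num
    rw [← hc]
    apply intervalIntegral.integral_mono_on (by norm_num) intervalIntegrable_const hi1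
    intro x hx
    apply Real.rpow_le_rpow (by positivity) ?_ hs0
    have hx2 : x^2 ≤ 1/4 := by nlinarith [hx.1, hx.2]
    nlinarith [mul_le_mul (show a^2-1 ≤ a^2 by linarith) hx2 (sq_nonneg x) (sq_nonneg a)]
  linarith

lemma aux_num (β a : ℝ) (hβ : 1/2 < β) (ha : 2 ≤ a) :
    (∫ w in (0:ℝ)..1, ((1 - a^2) * w^2 + a^2) ^ (2*β - 5/2) * w^2 * (1 - w^2)) ≤
      (max 1 (2 ^ (-(2*β - 5/2)) * (2 ^ (2*β - 5/2 + 1) + 1) / (2*β - 5/2 + 2))) *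
        (a^2) ^ (2*β - 5/2) := by
  obtain ⟨q, hqdef⟩ : ∃ q : ℝ, q = 2*β - 5/2 := ⟨_, rfl⟩
  rw [← hqdef]
  have hq32 : -3/2 < q := by rw [hqdef]; linarith
  have hA0 : (0:ℝ) < a^2 := by positivity
  have hAq : (0:ℝ) ≤ (a^2) ^ q := Real.rpow_nonneg hA0.le q
  rcases le_or_gt 0 q with hq | hq
  · -- q ≥ 0 case
    have hb : (∫ w in (0:ℝ)..1, ((1 - a^2) * w^2 + a^2) ^ q * w^2 * (1 - w^2)) ≤
        ∫ _ in (0:ℝ)..1, (a^2) ^ q := by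
      apply intervalIntegral.integral_mono_on (by norm_num) (aux_intInt2 a q ha)
        intervalIntegrable_const
      intro w hw
      have h1 : w^2 ≤ 1 := by nlinarith [hw.1, hw.2]
      have hΔ0 : (0:ℝ) ≤ (1 - a^2) * w^2 + a^2 := by
        nlinarith [mul_nonneg (show (0:ℝ) ≤ a^2-1 by nlinarith) (show (0:ℝ) ≤ 1-w^2 by linarith)]
      have h2 : ((1 - a^2) * w^2 + a^2) ^ q ≤ (a^2) ^ q :=
        Real.rpow_le_rpow hΔ0 (by nlinarith [mul_nonneg (sq_nonneg w) (show (0:ℝ) ≤ a^2-1 by nlinarith)]) hq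
      have h3 : w^2 * (1-w^2) ≤ 1 := by nlinarith [hw.1, hw.2]
      calc ((1 - a^2) * w^2 + a^2) ^ q * w^2 * (1 - w^2)
          = ((1 - a^2) * w^2 + a^2) ^ q * (w^2 * (1 - w^2)) := by ring
        _ ≤ (a^2) ^ q * 1 := mul_le_mul h2 h3 (by nlinarith [hw.1, hw.2]) hAq
        _ = (a^2) ^ q := by ring
    rw [intervalIntegral.integral_const] at hb
    simp only [smul_eq_mul] at hb
    calc (∫ w in (0:ℝ)..1, ((1 - a^2) * w^2 + a^2) ^ q * w^2 * (1 - w^2))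
        ≤ (1 - 0) * (a^2) ^ q := hb
      _ = 1 * (a^2) ^ q := by norm_num
      _ ≤ _ := mul_le_mul_of_nonneg_right (le_max_left _ _) hAq
  · -- q < 0 case
    have hq1 : (-1:ℝ) < q + 1 := by linarith
    have hA1 : (0:ℝ) < a^2 - 1 := by nlinarith
    have hC0 : (0:ℝ) ≤ 2 ^ (q+1) + 1 := by positivity
    have hAq1 : (0:ℝ) ≤ (a^2 - 1) ^ q := Real.rpow_nonneg hA1.le q
    -- integrable majorant
    have hint : IntervalIntegrable
        (fun w : ℝ => (a^2-1) ^ q * (2 ^ (q+1) + 1) * (1-w) ^ (q+1)) volume 0 1 := by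
      have h0 : IntervalIntegrable (fun x : ℝ => x ^ (q+1)) volume 0 1 :=
        intervalIntegral.intervalIntegrable_rpow' hq1
      have h1 := (h0.comp_sub_left 1).symm
      simpa using h1.const_mul ((a^2-1) ^ q * (2 ^ (q+1) + 1))
    have hb : (∫ w in (0:ℝ)..1, ((1 - a^2) * w^2 + a^2) ^ q * w^2 * (1 - w^2)) ≤
        ∫ w in (0:ℝ)..1, (a^2-1) ^ q * (2 ^ (q+1) + 1) * (1-w) ^ (q+1) := by
      apply intervalIntegral.integral_mono_on (by norm_num) (aux_intInt2 a q ha) hint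
      intro w hw
      rcases lt_or_eq_of_le hw.2 with h1 | h1
      · have hw0 := hw.1
        have h1w2 : (0:ℝ) < 1 - w^2 := by nlinarith
        have h1w : (0:ℝ) < 1 - w := by linarith
        have hb0 : (0:ℝ) < (a^2-1)*(1-w^2) := mul_pos hA1 h1w2
        have hΔlb : (a^2-1)*(1-w^2) ≤ (1 - a^2) * w^2 + a^2 := by nlinarith
        have hΔ0 : (0:ℝ) ≤ (1 - a^2) * w^2 + a^2 := le_trans hb0.le hΔlb
        have h2 : ((1 - a^2) * w^2 + a^2) ^ q ≤ ((a^2-1)*(1-w^2)) ^ q :=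
          Real.rpow_le_rpow_of_nonpos hb0 hΔlb hq.le
        have h3 : ((a^2-1)*(1-w^2)) ^ q = (a^2-1) ^ q * (1-w^2) ^ q :=
          Real.mul_rpow hA1.le h1w2.le
        have h4 : (1-w^2) ^ q * (1-w^2) = (1-w^2) ^ (q+1) :=
          (Real.rpow_add_one h1w2.ne' q).symm
        have h5 : (1-w^2) ^ (q+1) = (1-w) ^ (q+1) * (1+w) ^ (q+1) := by
          rw [← Real.mul_rpow h1w.le (by linarith)]
          congr 1; ring
        have h6 : (1+w) ^ (q+1) ≤ 2 ^ (q+1) + 1 := by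
          rcases le_or_gt 0 (q+1) with h | h
          · have := Real.rpow_le_rpow (by linarith : (0:ℝ) ≤ 1+w)
              (by linarith : 1+w ≤ 2) h
            linarith
          · have h7 := Real.rpow_le_one_of_one_le_of_nonpos
              (by linarith : (1:ℝ) ≤ 1+w) h.le
            have h8 : (0:ℝ) ≤ (2:ℝ) ^ (q+1) := Real.rpow_nonneg (by norm_num) _
            linarith
        have hw1q : (0:ℝ) ≤ (1-w) ^ (q+1) := Real.rpow_nonneg h1w.le _
        calc ((1 - a^2) * w^2 + a^2) ^ q * w^2 * (1 - w^2)
            ≤ ((1 - a^2) * w^2 + a^2) ^ q * 1 * (1 - w^2) := by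
              have := Real.rpow_nonneg hΔ0 q
              have hw2 : w^2 ≤ 1 := by nlinarith
              nlinarith [mul_nonneg this h1w2.le]
          _ = ((1 - a^2) * w^2 + a^2) ^ q * (1 - w^2) := by ring
          _ ≤ ((a^2-1)*(1-w^2)) ^ q * (1 - w^2) :=
              mul_le_mul_of_nonneg_right h2 h1w2.le
          _ = (a^2-1) ^ q * ((1-w^2) ^ q * (1-w^2)) := by rw [h3]; ring
          _ = (a^2-1) ^ q * ((1-w) ^ (q+1) * (1+w) ^ (q+1)) := by rw [h4, h5]
          _ ≤ (a^2-1) ^ q * ((1-w) ^ (q+1) * (2 ^ (q+1) + 1)) := by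
              apply mul_le_mul_of_nonneg_left _ hAq1
              exact mul_le_mul_of_nonneg_left h6 hw1q
          _ = (a^2-1) ^ q * (2 ^ (q+1) + 1) * (1-w) ^ (q+1) := by ring
      · -- w = 1
        subst h1
        have h9 : ((1:ℝ) - 1^2) = 0 := by norm_num
        rw [h9, mul_zero]
        positivity
    -- compute the majorant integral
    have hval : (∫ w in (0:ℝ)..1, (a^2-1) ^ q * (2 ^ (q+1) + 1) * (1-w) ^ (q+1)) =
        (a^2-1) ^ q * (2 ^ (q+1) + 1) * (1 / (q+2)) := by
      rw [intervalIntegral.integral_const_mul]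
      congr 1
      rw [intervalIntegral.integral_comp_sub_left (fun x : ℝ => x ^ (q+1)) 1]
      simp only [sub_self, sub_zero]
      rw [integral_rpow (Or.inl hq1)]
      rw [Real.one_rpow, Real.zero_rpow (by linarith : q + 1 + 1 ≠ 0)]
      rw [show q + 1 + 1 = q + 2 by ring]
      norm_num
    rw [hval] at hb
    -- (a^2-1)^q ≤ 2^(-q) * (a^2)^q
    have hd : (a^2-1) ^ q ≤ 2 ^ (-q) * (a^2) ^ q := by
      have h1 : a^2/2 ≤ a^2 - 1 := by nlinarith
      have h2 : (a^2-1) ^ q ≤ (a^2/2) ^ q :=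
        Real.rpow_le_rpow_of_nonpos (by nlinarith) h1 hq.le
      have h3 : (a^2/2 : ℝ) ^ q = (a^2) ^ q / 2 ^ q :=
        Real.div_rpow hA0.le (by norm_num) q
      rw [Real.rpow_neg (by norm_num : (0:ℝ) ≤ 2)]
      rw [h3] at h2
      rw [div_eq_mul_inv, mul_comm] at h2
      exact h2
    have hq2 : (0:ℝ) < q + 2 := by linarith
    calc (∫ w in (0:ℝ)..1, ((1 - a^2) * w^2 + a^2) ^ q * w^2 * (1 - w^2))
        ≤ (a^2-1) ^ q * (2 ^ (q+1) + 1) * (1 / (q+2)) := hb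
      _ ≤ (2 ^ (-q) * (a^2) ^ q) * (2 ^ (q+1) + 1) * (1 / (q+2)) := by
          apply mul_le_mul_of_nonneg_right (mul_le_mul_of_nonneg_right hd hC0)
          positivity
      _ = (2 ^ (-q) * (2 ^ (q+1) + 1) / (q+2)) * (a^2) ^ q := by ring
      _ ≤ _ := mul_le_mul_of_nonneg_right (le_max_right _ _) hAq

lemma aux_main (β a : ℝ) (hβ : 1/2 < β) (ha : 2 ≤ a) :
    (1 - a^2)^2 *
        (∫ w in (0:ℝ)..1, ((1 - a^2) * w^2 + a^2) ^ (2*β - 5/2) * w^2 * (1 - w^2)) /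
      (∫ w in (0:ℝ)..1, ((1 - a^2) * w^2 + a^2) ^ (2*β + 1/2)) ≤
    (2 * (max 1 (2 ^ (-(2*β - 5/2)) * (2 ^ (2*β - 5/2 + 1) + 1) / (2*β - 5/2 + 2))) /
        (3/4 : ℝ) ^ (2*β + 1/2)) / a^2 := by
  obtain ⟨q, hqdef⟩ : ∃ q : ℝ, q = 2*β - 5/2 := ⟨_, rfl⟩
  obtain ⟨s, hsdef⟩ : ∃ s : ℝ, s = 2*β + 1/2 := ⟨_, rfl⟩
  rw [← hqdef, ← hsdef]
  obtain ⟨K₁, hK1def⟩ : ∃ K₁ : ℝ,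
      K₁ = max 1 (2 ^ (-q) * (2 ^ (q + 1) + 1) / (q + 2)) := ⟨_, rfl⟩
  rw [← hK1def]
  have hK1 : (1:ℝ) ≤ K₁ := by rw [hK1def]; exact le_max_left _ _
  have hA0 : (0:ℝ) < a^2 := by positivity
  have h34 : (0:ℝ) < (3/4:ℝ) ^ s := Real.rpow_pos_of_pos (by norm_num) s
  have hN := aux_num β a hβ ha
  rw [← hqdef] at hN
  rw [← hK1def] at hN
  have hD := aux_denom β a hβ ha
  rw [← hsdef] at hD
  have hD0 : (0:ℝ) < ∫ w in (0:ℝ)..1, ((1 - a^2) * w^2 + a^2) ^ s := by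
    refine lt_of_lt_of_le ?_ hD
    have := Real.rpow_pos_of_pos (show (0:ℝ) < (3/4)*a^2 by positivity) s
    linarith
  have hN0 : (0:ℝ) ≤ ∫ w in (0:ℝ)..1, ((1 - a^2) * w^2 + a^2) ^ q * w^2 * (1 - w^2) := by
    apply intervalIntegral.integral_nonneg (by norm_num)
    intro u hu
    have h1 : (0:ℝ) ≤ (1 - a^2) * u^2 + a^2 := by
      nlinarith [mul_nonneg (sq_nonneg a) (show (0:ℝ) ≤ 1 - u^2 by nlinarith [hu.1, hu.2]),
        sq_nonneg u]
    have h2 : (0:ℝ) ≤ ((1 - a^2) * u^2 + a^2) ^ q := Real.rpow_nonneg h1 q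
    have h3 : (0:ℝ) ≤ 1 - u^2 := by nlinarith [hu.1, hu.2]
    positivity
  rw [div_le_div_iff₀ hD0 hA0]
  have hAq : (0:ℝ) ≤ (a^2) ^ q := Real.rpow_nonneg hA0.le q
  have step1 : (1 - a^2)^2 *
      (∫ w in (0:ℝ)..1, ((1 - a^2) * w^2 + a^2) ^ q * w^2 * (1 - w^2)) * a^2 ≤
      (a^2)^2 * (K₁ * (a^2) ^ q) * a^2 := by
    apply mul_le_mul_of_nonneg_right _ hA0.le
    apply mul_le_mul (by nlinarith) hN hN0 (by positivity)
  have step2 : ((a:ℝ)^2)^2 * (K₁ * (a^2) ^ q) * a^2 = K₁ * (a^2) ^ s := by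
    have h : ((a:ℝ)^2)^(2:ℕ) * (a^2) ^ q * a^2 = (a^2) ^ s := by
      rw [← Real.rpow_natCast (a^2) 2, ← Real.rpow_add hA0, ← Real.rpow_add_one hA0.ne']
      congr 1
      rw [hqdef, hsdef]; push_cast; ring
    calc ((a:ℝ)^2)^2 * (K₁ * (a^2) ^ q) * a^2
        = K₁ * (((a:ℝ)^2)^(2:ℕ) * (a^2) ^ q * a^2) := by ring
      _ = K₁ * (a^2) ^ s := by rw [h]
  have step3 : K₁ * (a^2) ^ s ≤
      (2 * K₁ / (3/4:ℝ) ^ s) * ∫ w in (0:ℝ)..1, ((1 - a^2) * w^2 + a^2) ^ s := by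
    have hK' : (0:ℝ) ≤ 2 * K₁ / (3/4:ℝ) ^ s := by positivity
    have he : (2 * K₁ / (3/4:ℝ) ^ s) * (1/2 * ((3/4) * a^2) ^ s) = K₁ * (a^2) ^ s := by
      rw [Real.mul_rpow (by norm_num) hA0.le]
      field_simp
    calc K₁ * (a^2) ^ s = (2 * K₁ / (3/4:ℝ) ^ s) * (1/2 * ((3/4) * a^2) ^ s) := he.symm
      _ ≤ _ := mul_le_mul_of_nonneg_left hD hK'
  calc (1 - a^2)^2 *
      (∫ w in (0:ℝ)..1, ((1 - a^2) * w^2 + a^2) ^ q * w^2 * (1 - w^2)) * a^2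
      ≤ (a^2)^2 * (K₁ * (a^2) ^ q) * a^2 := step1
    _ = K₁ * (a^2) ^ s := step2
    _ ≤ _ := step3

/-- `(1-a²)² · ∫₀¹ Δ_a(w)^(2β-5/2)·w²·(1-w²) dw / ∫₀¹ Δ_a(w)^(2β+1/2) dw → 0`
as `a → ∞`, for `β > 1/2`. -/
theorem stmt_10 (β : ℝ) (hβ : 1/2 < β) :
    Filter.Tendsto
      (fun a : ℝ =>
        (1 - a^2)^2 *
          (∫ w in (0:ℝ)..1, ((1 - a^2) * w^2 + a^2) ^ (2*β - 5/2) * w^2 * (1 - w^2)) /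
        (∫ w in (0:ℝ)..1, ((1 - a^2) * w^2 + a^2) ^ (2*β + 1/2)))
      Filter.atTop (nhds 0) := by
  have hnn : ∀ a : ℝ, 0 ≤
      (1 - a^2)^2 *
          (∫ w in (0:ℝ)..1, ((1 - a^2) * w^2 + a^2) ^ (2*β - 5/2) * w^2 * (1 - w^2)) /
        (∫ w in (0:ℝ)..1, ((1 - a^2) * w^2 + a^2) ^ (2*β + 1/2)) := by
    intro a
    apply div_nonneg
    · apply mul_nonneg (sq_nonneg _)
      apply intervalIntegral.integral_nonneg (by norm_num)
      intro u hu
      have h1 : (0:ℝ) ≤ (1 - a^2) * u^2 + a^2 := by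
        nlinarith [mul_nonneg (sq_nonneg a) (show (0:ℝ) ≤ 1 - u^2 by nlinarith [hu.1, hu.2]),
          sq_nonneg u]
      have h2 : (0:ℝ) ≤ ((1 - a^2) * u^2 + a^2) ^ (2*β - 5/2) := Real.rpow_nonneg h1 _
      have h3 : (0:ℝ) ≤ 1 - u^2 := by nlinarith [hu.1, hu.2]
      positivity
    · apply intervalIntegral.integral_nonneg (by norm_num)
      intro u hu
      apply Real.rpow_nonneg
      nlinarith [mul_nonneg (sq_nonneg a) (show (0:ℝ) ≤ 1 - u^2 by nlinarith [hu.1, hu.2]),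
        sq_nonneg u]
  apply squeeze_zero' (Eventually.of_forall hnn)
    ((eventually_ge_atTop (2:ℝ)).mono fun a ha => aux_main β a hβ ha)
  exact Filter.Tendsto.div_atTop tendsto_const_nhds (tendsto_pow_atTop two_ne_zero)
end

section
/- Let β > 1/2. Then (a²/4)·∫₀¹ (Δ_a(w)+1)²·Δ_a(w)^{2β−5/2} dw / ∫₀¹ Δ_a(w)^{2β+1/2} dw tends, as a → ∞, to (1/4)·∫₀¹ (1−w²)^{2β−1/2} dw / ∫₀¹ (1−w²)^{2β+1/2} dw, where Δ_a(w) = (1−a²)·w² + a². (The left-hand side equals the ratio ∫_{E(a)} H² f_β² dE(a) / ∫_{E(a)} f_β² dE(a) for f_β = Δ_a^β on the ellipsoid E(a).) -/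
open Filter Set intervalIntegral
open MeasureTheory Real


-- Δ ≥ 1
lemma aux_delta_ge_one {a w : ℝ} (ha : 1 ≤ a) (hw : w^2 ≤ 1) :
    1 ≤ (1 - a^2) * w^2 + a^2 := by
  nlinarith [mul_nonneg (by nlinarith : (0:ℝ) ≤ a^2 - 1) (by linarith : (0:ℝ) ≤ 1 - w^2)]

-- Δ ≤ a²
lemma aux_delta_le {a w : ℝ} (ha : 1 ≤ a) :
    (1 - a^2) * w^2 + a^2 ≤ a^2 := by
  nlinarith [mul_nonneg (by nlinarith : (0:ℝ) ≤ a^2 - 1) (sq_nonneg w)]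

-- limit of Δ/a² as a→∞
lemma aux_tendsto_ratio (x : ℝ) :
    Tendsto (fun a : ℝ => ((1 - a^2) * x^2 + a^2) / a^2) atTop (nhds (1 - x^2)) := by
  have h0 : Tendsto (fun a : ℝ => (a^2)⁻¹) atTop (nhds 0) :=
    tendsto_inv_atTop_zero.comp (tendsto_pow_atTop two_ne_zero)
  have h : Tendsto (fun a : ℝ => x^2 * (a^2)⁻¹ + (1 - x^2)) atTop (nhds (1 - x^2)) := by
    have := (h0.const_mul (x^2)).add_const (1 - x^2)
    simpa using this
  refine h.congr' ?_
  filter_upwards [eventually_ge_atTop (1:ℝ)] with a ha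
  have ha0 : (a:ℝ) ≠ 0 := by positivity
  field_simp
  ring

lemma aux_tendsto_ratio' (x : ℝ) :
    Tendsto (fun a : ℝ => ((1 - a^2) * x^2 + a^2 + 1) / a^2) atTop (nhds (1 - x^2)) := by
  have h0 : Tendsto (fun a : ℝ => (a^2)⁻¹) atTop (nhds 0) :=
    tendsto_inv_atTop_zero.comp (tendsto_pow_atTop two_ne_zero)
  have h : Tendsto (fun a : ℝ => (x^2 + 1) * (a^2)⁻¹ + (1 - x^2)) atTop (nhds (1 - x^2)) := by
    have := (h0.const_mul (x^2 + 1)).add_const (1 - x^2)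
    simpa using this
  refine h.congr' ?_
  filter_upwards [eventually_ge_atTop (1:ℝ)] with a ha
  have ha0 : (a:ℝ) ≠ 0 := by positivity
  field_simp
  ring

-- denominator convergence
lemma aux_denom_s11 {q : ℝ} (hq : 0 < q) :
    Tendsto (fun a : ℝ => ∫ w in (0:ℝ)..1, (((1 - a^2) * w^2 + a^2) / a^2) ^ q) atTop
      (nhds (∫ w in (0:ℝ)..1, (1 - w^2) ^ q)) := by
  apply intervalIntegral.tendsto_integral_filter_of_dominated_convergence
      (bound := fun _ => (1:ℝ))
  · filter_upwards [eventually_ge_atTop (1:ℝ)] with a ha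
    apply Continuous.aestronglyMeasurable
    exact (((continuous_const.mul (continuous_pow 2)).add continuous_const).div_const
      _).rpow_const (fun x => Or.inr hq.le)
  · filter_upwards [eventually_ge_atTop (1:ℝ)] with a ha
    filter_upwards with x hx
    rw [uIoc_of_le (by norm_num : (0:ℝ) ≤ 1)] at hx
    have hw2 : x^2 ≤ 1 := by nlinarith [hx.1, hx.2]
    have h1 : (1:ℝ) ≤ (1 - a^2) * x^2 + a^2 := aux_delta_ge_one ha hw2
    have ha2 : (0:ℝ) < a^2 := by positivity
    have ht0 : 0 ≤ ((1 - a^2) * x^2 + a^2) / a^2 := by positivity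
    have ht1 : ((1 - a^2) * x^2 + a^2) / a^2 ≤ 1 :=
      (div_le_one ha2).mpr (aux_delta_le ha)
    rw [Real.norm_eq_abs, abs_of_nonneg (Real.rpow_nonneg ht0 _)]
    exact Real.rpow_le_one ht0 ht1 hq.le
  · exact intervalIntegrable_const
  · filter_upwards [(Set.countable_singleton (1:ℝ)).ae_notMem volume] with x hx1 hx
    rw [uIoc_of_le (by norm_num : (0:ℝ) ≤ 1)] at hx
    have hxlt : x < 1 := lt_of_le_of_ne hx.2 (by simpa using hx1)
    have hb : (0:ℝ) < 1 - x^2 := by nlinarith [hx.1]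
    exact (aux_tendsto_ratio x).rpow_const (Or.inl hb.ne')

-- numerator convergence
lemma aux_num_s11 {p : ℝ} (hp : 0 < p) :
    Tendsto (fun a : ℝ => ∫ w in (0:ℝ)..1,
        (((1 - a^2) * w^2 + a^2 + 1) / a^2)^2 * (((1 - a^2) * w^2 + a^2) / a^2) ^ (p - 2))
      atTop (nhds (∫ w in (0:ℝ)..1, (1 - w^2) ^ p)) := by
  apply intervalIntegral.tendsto_integral_filter_of_dominated_convergence
      (bound := fun _ => (4:ℝ))
  · filter_upwards [eventually_ge_atTop (1:ℝ)] with a ha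
    apply ContinuousOn.aestronglyMeasurable _ measurableSet_uIoc
    rw [uIoc_of_le (by norm_num : (0:ℝ) ≤ 1)]
    apply ContinuousOn.mul
    · exact ((((continuous_const.mul (continuous_pow 2)).add continuous_const).add
        continuous_const).div_const _).continuousOn.pow 2
    · apply ContinuousOn.rpow_const
      · exact (((continuous_const.mul (continuous_pow 2)).add continuous_const).div_const
          _).continuousOn
      · intro x hx
        have hw2 : x^2 ≤ 1 := by nlinarith [hx.1, hx.2]
        have h1 : (1:ℝ) ≤ (1 - a^2) * x^2 + a^2 := aux_delta_ge_one ha hw2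
        have ha2 : (0:ℝ) < a^2 := by positivity
        left
        positivity
  · filter_upwards [eventually_ge_atTop (1:ℝ)] with a ha
    filter_upwards with x hx
    rw [uIoc_of_le (by norm_num : (0:ℝ) ≤ 1)] at hx
    have hw2 : x^2 ≤ 1 := by nlinarith [hx.1, hx.2]
    have h1 : (1:ℝ) ≤ (1 - a^2) * x^2 + a^2 := aux_delta_ge_one ha hw2
    have ha2 : (0:ℝ) < a^2 := by positivity
    set t := ((1 - a^2) * x^2 + a^2) / a^2 with ht
    have ht0 : 0 < t := by positivity
    have ht1 : t ≤ 1 := (div_le_one ha2).mpr (aux_delta_le ha)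
    have hs : ((1 - a^2) * x^2 + a^2 + 1) / a^2 ≤ 2 * t := by
      rw [ht]
      rw [div_le_iff₀ ha2, mul_comm, mul_assoc, div_mul_cancel₀ _ ha2.ne']
      nlinarith
    have hs0 : 0 ≤ ((1 - a^2) * x^2 + a^2 + 1) / a^2 := by positivity
    have hrn : 0 ≤ t ^ (p - 2) := Real.rpow_nonneg ht0.le _
    rw [Real.norm_eq_abs, abs_of_nonneg (by positivity)]
    have key : (((1 - a^2) * x^2 + a^2 + 1) / a^2)^2 * t ^ (p - 2) ≤ (2*t)^2 * t ^ (p-2) := by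
      apply mul_le_mul_of_nonneg_right _ hrn
      exact pow_le_pow_left₀ hs0 hs 2
    refine key.trans ?_
    have : (2*t)^2 * t^(p-2) = 4 * (t^(2:ℝ) * t^(p-2)) := by
      rw [Real.rpow_two]
      ring
    rw [this, ← Real.rpow_add ht0]
    have : t ^ (2 + (p - 2)) ≤ 1 := by
      apply Real.rpow_le_one ht0.le ht1
      linarith
    linarith [this]
  · exact intervalIntegrable_const
  · filter_upwards [(Set.countable_singleton (1:ℝ)).ae_notMem volume] with x hx1 hx
    rw [uIoc_of_le (by norm_num : (0:ℝ) ≤ 1)] at hx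
    have hxlt : x < 1 := lt_of_le_of_ne hx.2 (by simpa using hx1)
    have hb : (0:ℝ) < 1 - x^2 := by nlinarith [hx.1]
    have h1 := (aux_tendsto_ratio' x).pow 2
    have h2 := (aux_tendsto_ratio x).rpow_const (p := p - 2) (Or.inl hb.ne')
    have h := h1.mul h2
    have hval : (1 - x^2)^2 * (1 - x^2) ^ (p - 2) = (1 - x^2) ^ p := by
      rw [← Real.rpow_two, ← Real.rpow_add hb]
      norm_num
    rwa [hval] at h


/-- `(a²/4)·∫₀¹ (Δ_a(w)+1)²·Δ_a(w)^(2β-5/2) dw / ∫₀¹ Δ_a(w)^(2β+1/2) dw` tends, as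
`a → ∞`, to `(1/4)·∫₀¹ (1-w²)^(2β-1/2) dw / ∫₀¹ (1-w²)^(2β+1/2) dw`, for `β > 1/2`. -/
theorem stmt_11 (β : ℝ) (hβ : 1/2 < β) :
    Filter.Tendsto
      (fun a : ℝ =>
        a^2/4 *
          (∫ w in (0:ℝ)..1,
            ((1 - a^2) * w^2 + a^2 + 1)^2 * ((1 - a^2) * w^2 + a^2) ^ (2*β - 5/2)) /
        (∫ w in (0:ℝ)..1, ((1 - a^2) * w^2 + a^2) ^ (2*β + 1/2)))
      Filter.atTop
      (nhds (1/4 * (∫ w in (0:ℝ)..1, (1 - w^2) ^ (2*β - 1/2)) /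
        (∫ w in (0:ℝ)..1, (1 - w^2) ^ (2*β + 1/2)))) := by
  have hp : 0 < 2*β - 1/2 := by linarith
  have hq : 0 < 2*β + 1/2 := by linarith
  have hI2 : 0 < ∫ w in (0:ℝ)..1, (1 - w^2) ^ (2*β + 1/2) := by
    apply intervalIntegral_pos_of_pos_on
    · apply Continuous.intervalIntegrable
      exact ((continuous_const.sub (continuous_pow 2)).rpow_const
        (fun x => Or.inr hq.le))
    · intro x hx
      exact Real.rpow_pos_of_pos (by nlinarith [hx.1, hx.2] : (0:ℝ) < 1 - x^2) _
    · norm_num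
  have hnum := aux_num_s11 hp
  have hden := aux_denom_s11 hq
  rw [show (2*β - 1/2 - 2) = 2*β - 5/2 by ring] at hnum
  have hdiv :
      Filter.Tendsto (fun a : ℝ =>
        1/4 * (∫ w in (0:ℝ)..1,
            (((1 - a^2) * w^2 + a^2 + 1) / a^2)^2 *
              (((1 - a^2) * w^2 + a^2) / a^2) ^ (2*β - 5/2)) /
          (∫ w in (0:ℝ)..1, (((1 - a^2) * w^2 + a^2) / a^2) ^ (2*β + 1/2)))
        Filter.atTop
        (nhds (1/4 * (∫ w in (0:ℝ)..1, (1 - w^2) ^ (2*β - 1/2)) /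
          (∫ w in (0:ℝ)..1, (1 - w^2) ^ (2*β + 1/2)))) :=
    (Filter.Tendsto.const_mul _ hnum).div hden hI2.ne'
  refine hdiv.congr' ?_
  filter_upwards [Filter.eventually_ge_atTop (1:ℝ)] with a ha
  have ha2 : (0:ℝ) < a^2 := by positivity
  set c : ℝ := (a^2) ^ (2*β - 1/2) with hcdef
  have hc0 : 0 < c := Real.rpow_pos_of_pos ha2 _
  have hcsplit : c = (a^2)^(2:ℕ) * (a^2) ^ (2*β - 5/2) := by
    rw [hcdef, show (2*β - 1/2) = (2:ℝ) + (2*β - 5/2) by ring, Real.rpow_add ha2,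
      Real.rpow_two]
  have hcsplit' : (a^2) ^ (2*β + 1/2) = c * a^2 := by
    rw [hcdef, show (2*β + 1/2) = (2*β - 1/2) + 1 by ring, Real.rpow_add ha2,
      Real.rpow_one]
  have IN : (∫ w in (0:ℝ)..1,
        (((1 - a^2) * w^2 + a^2 + 1) / a^2)^2 *
          (((1 - a^2) * w^2 + a^2) / a^2) ^ (2*β - 5/2))
      = (∫ w in (0:ℝ)..1,
          ((1 - a^2) * w^2 + a^2 + 1)^2 * ((1 - a^2) * w^2 + a^2) ^ (2*β - 5/2)) / c := by
    rw [← intervalIntegral.integral_div]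
    apply intervalIntegral.integral_congr
    intro w hw
    rw [Set.uIcc_of_le (by norm_num : (0:ℝ) ≤ 1)] at hw
    have hw2 : w^2 ≤ 1 := by nlinarith [hw.1, hw.2]
    have hD1 : (1:ℝ) ≤ (1 - a^2) * w^2 + a^2 := aux_delta_ge_one ha hw2
    have hD0 : (0:ℝ) ≤ (1 - a^2) * w^2 + a^2 := by linarith
    simp only
    rw [Real.div_rpow hD0 (sq_nonneg a), div_pow, div_mul_div_comm, hcsplit]
  have ID : (∫ w in (0:ℝ)..1, (((1 - a^2) * w^2 + a^2) / a^2) ^ (2*β + 1/2))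
      = (∫ w in (0:ℝ)..1, ((1 - a^2) * w^2 + a^2) ^ (2*β + 1/2)) / (c * a^2) := by
    rw [← intervalIntegral.integral_div]
    apply intervalIntegral.integral_congr
    intro w hw
    rw [Set.uIcc_of_le (by norm_num : (0:ℝ) ≤ 1)] at hw
    have hw2 : w^2 ≤ 1 := by nlinarith [hw.1, hw.2]
    have hD1 : (1:ℝ) ≤ (1 - a^2) * w^2 + a^2 := aux_delta_ge_one ha hw2
    have hD0 : (0:ℝ) ≤ (1 - a^2) * w^2 + a^2 := by linarith
    simp only
    rw [Real.div_rpow hD0 (sq_nonneg a), hcsplit']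
  simp only [IN, ID]
  set N := ∫ w in (0:ℝ)..1,
      ((1 - a^2) * w^2 + a^2 + 1)^2 * ((1 - a^2) * w^2 + a^2) ^ (2*β - 5/2) with hN
  set D := ∫ w in (0:ℝ)..1, ((1 - a^2) * w^2 + a^2) ^ (2*β + 1/2) with hD
  rcases eq_or_ne D 0 with hDz | hDz
  · rw [hDz, zero_div, div_zero, div_zero]
  · have ha0 : (a:ℝ) ≠ 0 := by positivity
    field_simp
end

section
/- Define R(a) = [ (a²/4)·∫_{−1}^{1} Δ_a(w)^{−5/2}·(Δ_a(w)+1)² dw ] / ∫_{−1}^{1} Δ_a(w)^{1/2} dw for a > 0, where Δ_a(w) = (1−a²)·w² + a². Then R(a) → +∞ as a → 0⁺ and R(a) → 1/2 as a → ∞. -/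
/-!
For `a ≤ 1` we have `Δ_a ≤ 1`, so the area integral is at most `2`, while on `|w| ≤ a` also
`Δ_a ≤ 2a²`, so the curvature integral is at least `a²/4 · 2a · (2a²)⁻² = 1/(8a)`; hence
`R(a) ≥ 1/(16a)`.

For `a > 1` both integrals are elementary, with primitives built from
`arcsin (√(a² - 1) w / a)`, and they satisfy `∫ H² = area / 2 + 2/3 + 1/(3a²)`. As the area
grows at least like `a`, `R(a) = 1/2 + (2/3 + 1/(3a²)) / area → 1/2`.
-/

open Filter Set intervalIntegral Topology Real

lemma Real.rpow_neg_five_div_two {x : ℝ} (hx : 0 ≤ x) :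
    x ^ (-(5:ℝ)/2) = (x^2 * √x)⁻¹ := by
  rw [show -(5:ℝ)/2 = -(2 + 1/2) by norm_num, rpow_neg hx, rpow_add' hx (by norm_num), rpow_two,
    ← sqrt_eq_rpow]

lemma sq_le_one_of_mem_uIcc {w : ℝ} (hw : w ∈ uIcc (-1:ℝ) 1) : w^2 ≤ 1 := by
  rw [uIcc_of_le (by norm_num)] at hw
  nlinarith [hw.1, hw.2]

noncomputable section

namespace Ellipsoid

def delta (a w : ℝ) : ℝ := (1 - a^2) * w^2 + a^2

/-- Both integrals over `E(a)` carry a factor `2π` from the `φ`-integration, which cancels in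
the ratio. -/
def totalSqMeanCurvature (a : ℝ) : ℝ :=
  a^2/4 * ∫ w in (-1:ℝ)..1, delta a w ^ (-(5:ℝ)/2) * (delta a w + 1)^2

def area (a : ℝ) : ℝ := ∫ w in (-1:ℝ)..1, delta a w ^ ((1:ℝ)/2)

def meanCurvatureRatio (a : ℝ) : ℝ := totalSqMeanCurvature a / area a

variable {a w : ℝ}

lemma delta_eq (a w : ℝ) : delta a w = w^2 + a^2 * (1 - w^2) := by
  unfold delta; ring

lemma delta_one (a : ℝ) : delta a 1 = 1 := by
  unfold delta; ring

lemma delta_neg_one (a : ℝ) : delta a (-1) = 1 := by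
  unfold delta; ring

lemma delta_pos (ha : a ≠ 0) (hw : w^2 ≤ 1) : 0 < delta a w := by
  rcases hw.lt_or_eq with hw | hw
  · have : 0 < a^2 * (1 - w^2) := mul_pos (by positivity) (by linarith)
    rw [delta_eq]
    positivity
  · simp [delta_eq, hw]

lemma delta_pos_of_mem_uIcc (ha : a ≠ 0) (hw : w ∈ uIcc (-1:ℝ) 1) : 0 < delta a w :=
  delta_pos ha (sq_le_one_of_mem_uIcc hw)

lemma delta_nonneg (ha : a^2 ≤ 1) : 0 ≤ delta a w := by
  unfold delta
  nlinarith [mul_nonneg (sub_nonneg.2 ha) (sq_nonneg w), sq_nonneg a]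

lemma delta_le_one (ha : a^2 ≤ 1) (hw : w^2 ≤ 1) : delta a w ≤ 1 := by
  unfold delta
  nlinarith [mul_nonneg (sub_nonneg.2 ha) (sub_nonneg.2 hw)]

lemma delta_le_two_mul_sq (hw : w^2 ≤ a^2) : delta a w ≤ 2 * a^2 := by
  unfold delta
  nlinarith [mul_nonneg (sq_nonneg a) (sq_nonneg w)]

lemma continuous_delta (a : ℝ) : Continuous (delta a) := by
  unfold delta; fun_prop

lemma continuousOn_delta_rpow (ha : a ≠ 0) (p : ℝ) :
    ContinuousOn (fun w => delta a w ^ p) (uIcc (-1) 1) := fun _ hw =>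
  ((continuous_delta a).continuousAt.rpow_const
    (Or.inl (delta_pos_of_mem_uIcc ha hw).ne')).continuousWithinAt

lemma intervalIntegrable_totalSqMeanCurvature_integrand (ha : a ≠ 0) :
    IntervalIntegrable (fun w => delta a w ^ (-(5:ℝ)/2) * (delta a w + 1)^2)
      MeasureTheory.volume (-1) 1 :=
  ((continuousOn_delta_rpow ha _).mul
    (((continuous_delta a).add continuous_const).pow 2).continuousOn).intervalIntegrable

lemma area_pos (ha : a ≠ 0) : 0 < area a :=
  intervalIntegral_pos_of_pos_on (continuousOn_delta_rpow ha _).intervalIntegrable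
    (fun _ hw => rpow_pos_of_pos (delta_pos ha (by nlinarith [hw.1, hw.2])) _) (by norm_num)

lemma area_le_two (ha : a^2 ≤ 1) : area a ≤ 2 := by
  have h : ‖area a‖ ≤ 1 * |1 - (-1)| := norm_integral_le_of_norm_le_const fun w hw => by
    have hw : w^2 ≤ 1 := by
      rw [uIoc_of_le (by norm_num)] at hw
      nlinarith [hw.1, hw.2]
    rw [Real.norm_of_nonneg (rpow_nonneg (delta_nonneg ha) _)]
    exact rpow_le_one (delta_nonneg ha) (delta_le_one ha hw) (by norm_num)
  norm_num at h
  exact (le_abs_self _).trans h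

lemma inv_four_mul_pow_four_le_integrand (ha0 : a ≠ 0) (ha : a^2 ≤ 1) (hw : w^2 ≤ a^2) :
    (4 * a^4)⁻¹ ≤ delta a w ^ (-(5:ℝ)/2) * (delta a w + 1)^2 := by
  have hΔ : 0 < delta a w := delta_pos ha0 (hw.trans ha)
  calc (4 * a^4)⁻¹ ≤ (delta a w ^ 2)⁻¹ := by
        have := delta_le_two_mul_sq hw
        gcongr
        nlinarith
    _ = delta a w ^ (-(2:ℝ)) := by rw [rpow_neg hΔ.le, rpow_two]
    _ ≤ delta a w ^ (-(5:ℝ)/2) :=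
        rpow_le_rpow_of_exponent_ge hΔ (delta_le_one ha (hw.trans ha)) (by norm_num)
    _ ≤ delta a w ^ (-(5:ℝ)/2) * (delta a w + 1)^2 :=
        le_mul_of_one_le_right (rpow_nonneg hΔ.le _) (by nlinarith)

lemma inv_eight_mul_le_totalSqMeanCurvature (ha0 : 0 < a) (ha1 : a ≤ 1) :
    (8 * a)⁻¹ ≤ totalSqMeanCurvature a := by
  have ha : a^2 ≤ 1 := by nlinarith
  set f := fun w => delta a w ^ (-(5:ℝ)/2) * (delta a w + 1)^2
  have hf : IntervalIntegrable f MeasureTheory.volume (-1) 1 :=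
    intervalIntegrable_totalSqMeanCurvature_integrand ha0.ne'
  have hbound : ∀ w ∈ Icc (-a) a, (4 * a^4)⁻¹ ≤ f w := fun w hw =>
    inv_four_mul_pow_four_le_integrand ha0.ne' ha (by nlinarith [hw.1, hw.2])
  have hint : (2 * a^3)⁻¹ ≤ ∫ w in (-1:ℝ)..1, f w :=
    calc (2 * a^3)⁻¹ = ∫ _ in (-a)..a, (4 * a^4)⁻¹ := by
          rw [integral_const, smul_eq_mul]; field_simp; ring
      _ ≤ ∫ w in (-a)..a, f w := by
          refine integral_mono_on (by linarith) intervalIntegrable_const (hf.mono_set ?_) hbound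
          rw [uIcc_of_le (by linarith), uIcc_of_le (by norm_num)]
          exact Icc_subset_Icc (by linarith) ha1
      _ ≤ ∫ w in (-1:ℝ)..1, f w :=
          integral_mono_interval (by linarith) (by linarith) ha1
            (.of_forall fun _ => mul_nonneg (rpow_nonneg (delta_nonneg ha) _) (sq_nonneg _)) hf
  calc (8 * a)⁻¹ = a^2/4 * (2 * a^3)⁻¹ := by field_simp; ring
    _ ≤ totalSqMeanCurvature a := by unfold totalSqMeanCurvature; gcongr

lemma inv_div_sixteen_le_meanCurvatureRatio (ha0 : 0 < a) (ha1 : a ≤ 1) :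
    a⁻¹ / 16 ≤ meanCurvatureRatio a :=
  calc a⁻¹ / 16 = (8 * a)⁻¹ / 2 := by field_simp; ring
    _ ≤ totalSqMeanCurvature a / area a := by
        have := inv_eight_mul_le_totalSqMeanCurvature ha0 ha1
        gcongr
        · exact this.trans' (by positivity)
        · exact area_pos ha0.ne'
        · exact area_le_two (by nlinarith)

theorem tendsto_meanCurvatureRatio_nhdsGT_zero :
    Tendsto meanCurvatureRatio (𝓝[>] 0) atTop := by
  refine tendsto_atTop_mono' _ ?_
    (tendsto_inv_nhdsGT_zero.atTop_div_const (by norm_num : (0:ℝ) < 16))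
  filter_upwards [Ioo_mem_nhdsGT (by norm_num : (0:ℝ) < 1)] with a ha
  exact inv_div_sixteen_le_meanCurvatureRatio ha.1 ha.2.le

lemma hasDerivAt_delta (a w : ℝ) : HasDerivAt (delta a) ((1 - a^2) * (2 * w)) w := by
  unfold delta
  simpa using ((hasDerivAt_pow 2 w).const_mul (1 - a^2)).add_const (a^2)

lemma hasDerivAt_sqrt_delta (hw : 0 < delta a w) :
    HasDerivAt (fun w => √(delta a w)) ((1 - a^2) * w / √(delta a w)) w := by
  refine ((hasDerivAt_sqrt hw.ne').comp w (hasDerivAt_delta a w)).congr_deriv ?_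
  field_simp

lemma hasDerivAt_delta_mul_sqrt_delta (hw : 0 < delta a w) :
    HasDerivAt (fun w => delta a w * √(delta a w)) (3 * (1 - a^2) * w * √(delta a w)) w := by
  have hs := sqrt_pos.2 hw
  refine ((hasDerivAt_delta a w).mul (hasDerivAt_sqrt_delta hw)).congr_deriv ?_
  field_simp
  linear_combination ((a^2 - 1) * w) * sq_sqrt hw.le

lemma hasDerivAt_arcsin_mul_div (ha : 1 < a) (hw : 0 < delta a w) :
    HasDerivAt (fun w => arcsin (√(a^2 - 1) * w / a)) (√(a^2 - 1) / √(delta a w)) w := by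
  have ha0 : 0 < a := by linarith
  have hx : 1 - (√(a^2 - 1) * w / a)^2 = delta a w / a^2 := by
    unfold delta
    field_simp
    rw [sq_sqrt (by nlinarith)]
    ring
  have hx1 : (√(a^2 - 1) * w / a)^2 < 1 := by
    have : 0 < delta a w / a^2 := by positivity
    linarith
  have hin : HasDerivAt (fun w => √(a^2 - 1) * w / a) (√(a^2 - 1) / a) w := by
    simpa using ((hasDerivAt_id' w).const_mul √(a^2 - 1)).div_const a
  refine ((hasDerivAt_arcsin (by nlinarith) (by nlinarith)).comp w hin).congr_deriv ?_
  rw [hx, sqrt_div' _ (sq_nonneg a), sqrt_sq ha0.le]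
  have := sqrt_pos.2 hw
  field_simp

lemma hasDerivAt_area_primitive (ha : 1 < a) (hw : 0 < delta a w) :
    HasDerivAt
      (fun w => (w * √(delta a w) + a^2 / √(a^2 - 1) * arcsin (√(a^2 - 1) * w / a)) / 2)
      (delta a w ^ ((1:ℝ)/2)) w := by
  have hb : 0 < √(a^2 - 1) := sqrt_pos.2 (by nlinarith)
  have hs := sqrt_pos.2 hw
  refine ((((hasDerivAt_id' w).mul (hasDerivAt_sqrt_delta hw)).add
    ((hasDerivAt_arcsin_mul_div ha hw).const_mul (a^2 / √(a^2 - 1)))).div_const 2).congr_deriv ?_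
  rw [← sqrt_eq_rpow]
  field_simp
  rw [sq_sqrt hw.le]
  unfold delta
  ring

lemma hasDerivAt_arcsin_mul_div_div (ha : 1 < a) (hw : 0 < delta a w) :
    HasDerivAt (fun w => arcsin (√(a^2 - 1) * w / a) / √(a^2 - 1)) (√(delta a w))⁻¹ w := by
  have hb : 0 < √(a^2 - 1) := sqrt_pos.2 (by nlinarith)
  refine ((hasDerivAt_arcsin_mul_div ha hw).div_const _).congr_deriv ?_
  field_simp

lemma hasDerivAt_div_sq_mul_sqrt_delta (ha : a ≠ 0) (hw : 0 < delta a w) :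
    HasDerivAt (fun w => w / (a^2 * √(delta a w))) (delta a w * √(delta a w))⁻¹ w := by
  have hs := sqrt_pos.2 hw
  refine ((hasDerivAt_id' w).div ((hasDerivAt_sqrt_delta hw).const_mul (a^2))
    (by positivity)).congr_deriv ?_
  have h : √(delta a w) ^ 2 = (1 - a^2) * w^2 + a^2 := sq_sqrt hw.le
  field_simp
  unfold delta at h ⊢
  linear_combination ((1 - a^2) * w^2) * h

lemma hasDerivAt_cubic_div_delta_mul_sqrt_delta (ha : a ≠ 0) (hw : 0 < delta a w) :
    HasDerivAt
      (fun w => (3 * a^2 * w - 2 * (a^2 - 1) * w^3) / (3 * a^4 * (delta a w * √(delta a w))))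
      (delta a w ^ 2 * √(delta a w))⁻¹ w := by
  have hs := sqrt_pos.2 hw
  have hp : HasDerivAt (fun w => 3 * a^2 * w - 2 * (a^2 - 1) * w^3)
      (3 * a^2 - 2 * (a^2 - 1) * (3 * w^2)) w := by
    simpa using ((hasDerivAt_id' w).const_mul (3 * a^2)).fun_sub
      ((hasDerivAt_pow 3 w).const_mul (2 * (a^2 - 1)))
  refine (hp.div ((hasDerivAt_delta_mul_sqrt_delta hw).const_mul (3 * a^4))
    (by positivity)).congr_deriv ?_
  field_simp
  unfold delta
  ring

/-- `Δ^{-5/2} (Δ + 1)² = Δ^{-1/2} + 2 Δ^{-3/2} + Δ^{-5/2}`, and each term has an elementary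
primitive. -/
lemma hasDerivAt_totalSqMeanCurvature_primitive (ha : 1 < a) (hw : 0 < delta a w) :
    HasDerivAt (fun w => arcsin (√(a^2 - 1) * w / a) / √(a^2 - 1)
        + 2 * (w / (a^2 * √(delta a w)))
        + (3 * a^2 * w - 2 * (a^2 - 1) * w^3) / (3 * a^4 * (delta a w * √(delta a w))))
      (delta a w ^ (-(5:ℝ)/2) * (delta a w + 1)^2) w := by
  have ha0 : a ≠ 0 := by positivity
  have hs := sqrt_pos.2 hw
  refine (((hasDerivAt_arcsin_mul_div_div ha hw).add
    ((hasDerivAt_div_sq_mul_sqrt_delta ha0 hw).const_mul 2)).add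
    (hasDerivAt_cubic_div_delta_mul_sqrt_delta ha0 hw)).congr_deriv ?_
  rw [rpow_neg_five_div_two hw.le]
  field_simp
  ring

lemma area_eq (ha : 1 < a) : area a = 1 + a^2 / √(a^2 - 1) * arcsin (√(a^2 - 1) / a) := by
  rw [area, integral_eq_sub_of_hasDerivAt
    (fun _ hw => hasDerivAt_area_primitive ha (delta_pos_of_mem_uIcc (by positivity) hw))
    (continuousOn_delta_rpow (by positivity) _).intervalIntegrable]
  simp only [delta_one, delta_neg_one, mul_neg_one, mul_one, neg_div, arcsin_neg, sqrt_one]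
  ring

lemma totalSqMeanCurvature_eq (ha : 1 < a) :
    totalSqMeanCurvature a = area a / 2 + (2/3 + 1 / (3 * a^2)) := by
  rw [totalSqMeanCurvature, integral_eq_sub_of_hasDerivAt
    (fun _ hw => hasDerivAt_totalSqMeanCurvature_primitive ha
      (delta_pos_of_mem_uIcc (by positivity) hw))
    (intervalIntegrable_totalSqMeanCurvature_integrand (by positivity)), area_eq ha]
  simp only [delta_one, delta_neg_one, mul_neg_one, mul_one, neg_div, arcsin_neg, sqrt_one]
  have : 0 < √(a^2 - 1) := sqrt_pos.2 (by nlinarith)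
  field_simp
  ring

lemma meanCurvatureRatio_eq (ha : 1 < a) :
    meanCurvatureRatio a = 1/2 + (2/3 + 1 / (3 * a^2)) / area a := by
  have := area_pos (a := a) (by positivity)
  rw [meanCurvatureRatio, totalSqMeanCurvature_eq ha]
  field_simp

lemma le_area (ha : 1 < a) : a ≤ area a := by
  have ha0 : 0 < a := by linarith
  have hb : 0 < √(a^2 - 1) := sqrt_pos.2 (by nlinarith)
  have hx : √(a^2 - 1) / a ≤ 1 := by
    rw [div_le_one ha0, sqrt_le_iff]
    constructor <;> linarith
  have hsin : √(a^2 - 1) / a ≤ arcsin (√(a^2 - 1) / a) := by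
    conv_lhs => rw [← sin_arcsin (by linarith [div_pos hb ha0]) hx]
    exact sin_le (arcsin_nonneg.2 (by positivity))
  calc a = a^2 / √(a^2 - 1) * (√(a^2 - 1) / a) := by field_simp
    _ ≤ a^2 / √(a^2 - 1) * arcsin (√(a^2 - 1) / a) := by gcongr
    _ ≤ area a := by rw [area_eq ha]; linarith

lemma tendsto_area_atTop : Tendsto area atTop atTop :=
  tendsto_atTop_mono' _ (eventually_gt_atTop 1 |>.mono fun _ => le_area) tendsto_id

theorem tendsto_meanCurvatureRatio_atTop : Tendsto meanCurvatureRatio atTop (𝓝 (1/2)) := by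
  have hc : Tendsto (fun a : ℝ => 2/3 + 1 / (3 * a^2)) atTop (𝓝 (2/3)) := by
    simpa only [add_zero] using (tendsto_const_nhds (x := (2/3 : ℝ))).add
      ((tendsto_const_nhds (x := (1 : ℝ))).div_atTop
        ((tendsto_pow_atTop two_ne_zero).const_mul_atTop (by norm_num : (0:ℝ) < 3)))
  have hlim : Tendsto (fun a => 1/2 + (2/3 + 1 / (3 * a^2)) / area a) atTop (𝓝 (1/2 + 0)) :=
    tendsto_const_nhds.add (hc.div_atTop tendsto_area_atTop)
  rw [add_zero] at hlim
  exact hlim.congr' (eventually_gt_atTop 1 |>.mono fun _ ha => (meanCurvatureRatio_eq ha).symm)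

end Ellipsoid

end

/-- The classical `L²`-mean-curvature bound
`R(a) = (a²/4)·∫_{-1}^{1} Δ_a(w)^{-5/2}·(Δ_a(w)+1)² dw / ∫_{-1}^{1} Δ_a(w)^{1/2} dw`
satisfies `R(a) → ∞` as `a → 0⁺` and `R(a) → 1/2` as `a → ∞`. -/
theorem stmt_14 (R : ℝ → ℝ)
    (hR : ∀ a : ℝ, R a =
      (a^2/4 * ∫ w in (-1:ℝ)..1,
          ((1 - a^2) * w^2 + a^2) ^ (-(5:ℝ)/2) * ((1 - a^2) * w^2 + a^2 + 1)^2) /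
        ∫ w in (-1:ℝ)..1, ((1 - a^2) * w^2 + a^2) ^ ((1:ℝ)/2)) :
    Filter.Tendsto R (nhdsWithin 0 (Set.Ioi 0)) Filter.atTop ∧
    Filter.Tendsto R Filter.atTop (nhds (1/2)) := by
  obtain rfl : R = Ellipsoid.meanCurvatureRatio := funext hR
  exact ⟨Ellipsoid.tendsto_meanCurvatureRatio_nhdsGT_zero,
    Ellipsoid.tendsto_meanCurvatureRatio_atTop⟩
end

section
/- Let 0 < a < 1 and r > 0, and define φ(ψ) = 2·arctan( √((1−a)/(1+a)) · tan( (√(1−a²)/(2r))·ψ ) ) for ψ ∈ (−πr/√(1−a²), πr/√(1−a²)). Then φ is differentiable and satisfies the uniformization ODE φ'(ψ) = (1 − a·cos(φ(ψ)))/r on this interval, with φ(0) = 0. -/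
/-!
For `φ = 2 arctan (b tan (k ψ))` the chain rule together with
`cos φ = (1 - u²) / (1 + u²)`, `u = tan (φ / 2)`, gives
`φ' = k ((b + b⁻¹) + (b - b⁻¹) cos φ)` wherever `cos (k ψ) ≠ 0`.
For `b = √((1 - a) / (1 + a))` one has `√(1 - a²) b = 1 - a` and `√(1 - a²) b⁻¹ = 1 + a`,
so with `k = √(1 - a²) / (2 r)` the two coefficients become `1 / r` and `-a / r`.
The interval of the statement is exactly where `|k ψ| < π / 2`.
-/

open Set Real

theorem cos_two_mul_arctan (y : ℝ) : cos (2 * arctan y) = (1 - y ^ 2) / (1 + y ^ 2) := by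
  have hy : (0 : ℝ) < 1 + y ^ 2 := by positivity
  rw [cos_two_mul, cos_sq_arctan]
  field_simp
  ring

theorem hasDerivAt_two_mul_arctan_mul_tan (b k : ℝ) {x : ℝ} (hx : cos (k * x) ≠ 0) :
    HasDerivAt (fun x => 2 * arctan (b * tan (k * x)))
      (k * ((b + b⁻¹) + (b - b⁻¹) * cos (2 * arctan (b * tan (k * x))))) x := by
  set t := tan (k * x)
  have hderiv : HasDerivAt (fun x => 2 * arctan (b * tan (k * x)))
      (2 * (1 / (1 + (b * t) ^ 2) * (b * (1 / cos (k * x) ^ 2 * (k * 1))))) x :=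
    ((((hasDerivAt_tan hx).comp x ((hasDerivAt_id x).const_mul k)).const_mul b).arctan).const_mul 2
  refine hderiv.congr_deriv ?_
  have hsec : 1 / cos (k * x) ^ 2 = 1 + t ^ 2 := by
    rw [← inv_one_add_tan_sq hx, one_div, inv_inv]
  -- holds even at `b = 0`
  have hbinv : b⁻¹ * b * b = b := inv_mul_mul_self b
  have hden : (0 : ℝ) < 1 + (b * t) ^ 2 := by positivity
  rw [cos_two_mul_arctan, hsec]
  field_simp
  linear_combination (-2 * k * (1 + t ^ 2)) * hbinv

theorem sqrt_one_sub_sq_mul_sqrt_div {a : ℝ} (ha₀ : -1 < a) (ha₁ : a < 1) :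
    √(1 - a ^ 2) * √((1 - a) / (1 + a)) = 1 - a := by
  have hsq : (1 - a ^ 2) * ((1 - a) / (1 + a)) = (1 - a) ^ 2 := by
    field_simp [show 1 + a ≠ 0 by linarith]
    ring
  rw [← sqrt_mul (by nlinarith), hsq, sqrt_sq (by linarith)]

theorem sqrt_one_sub_sq_mul_inv_sqrt_div {a : ℝ} (ha₀ : -1 < a) (ha₁ : a < 1) :
    √(1 - a ^ 2) * (√((1 - a) / (1 + a)))⁻¹ = 1 + a := by
  have h := sqrt_one_sub_sq_mul_sqrt_div (a := -a) (by linarith) (by linarith)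
  simp only [neg_sq, sub_neg_eq_add, ← sub_eq_add_neg] at h
  rwa [← sqrt_inv, inv_div]

theorem cos_mul_ne_zero_of_mem_Ioo {c x : ℝ} (hc : 0 < c)
    (hx : x ∈ Ioo (-(π / 2 / c)) (π / 2 / c)) : cos (c * x) ≠ 0 := by
  refine (cos_pos_of_mem_Ioo ⟨?_, ?_⟩).ne'
  · have h := mul_lt_mul_of_pos_left hx.1 hc
    rwa [mul_neg, mul_div_cancel₀ _ hc.ne'] at h
  · have h := mul_lt_mul_of_pos_left hx.2 hc
    rwa [mul_div_cancel₀ _ hc.ne'] at h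

/-- For `0 < a < 1` and `r > 0`, the function
`φ(ψ) = 2·arctan(√((1-a)/(1+a))·tan((√(1-a²)/(2r))·ψ))` solves the uniformization ODE
`φ'(ψ) = (1 - a·cos(φ(ψ)))/r` on `(-πr/√(1-a²), πr/√(1-a²))`, with `φ(0) = 0`. -/
theorem stmt_17 (a r : ℝ) (ha0 : 0 < a) (ha1 : a < 1) (hr : 0 < r)
    (φ : ℝ → ℝ)
    (hφ : ∀ ψ : ℝ, φ ψ =
      2 * Real.arctan (Real.sqrt ((1 - a) / (1 + a)) *
        Real.tan ((Real.sqrt (1 - a^2) / (2 * r)) * ψ))) :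
    (∀ ψ ∈ Set.Ioo (-(Real.pi * r / Real.sqrt (1 - a^2)))
        (Real.pi * r / Real.sqrt (1 - a^2)),
      HasDerivAt φ ((1 - a * Real.cos (φ ψ)) / r) ψ) ∧
    φ 0 = 0 := by
  set b := √((1 - a) / (1 + a))
  set s := √(1 - a ^ 2)
  have hs : 0 < s := sqrt_pos.2 (by nlinarith)
  have hφ' : φ = fun ψ => 2 * arctan (b * tan (s / (2 * r) * ψ)) := funext hφ
  refine ⟨fun ψ hψ => ?_, by simp [hφ']⟩
  rw [show π * r / s = π / 2 / (s / (2 * r)) by field_simp] at hψ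
  have hderiv := hasDerivAt_two_mul_arctan_mul_tan b (s / (2 * r))
    (cos_mul_ne_zero_of_mem_Ioo (by positivity) hψ)
  rw [← hφ ψ, ← hφ'] at hderiv
  refine hderiv.congr_deriv ?_
  have hsb := sqrt_one_sub_sq_mul_sqrt_div (by linarith) ha1
  have hsb_inv := sqrt_one_sub_sq_mul_inv_sqrt_div (by linarith) ha1
  linear_combination (hsb + hsb_inv + cos (φ ψ) * (hsb - hsb_inv)) / (2 * r)
end

section
/- Suppose that for each a ∈ (0,1) a measurable function w_a : (0,1] → ℝ is given satisfying, for all x ∈ (0,1]: (1−x²)/(1+x²) ≤ w_a(x) and w_a(x)² ≤ 1 − x^{2/√(1−a²)}. Then ∫₀¹ (1/x)·( w_a(x)/√(Δ_a(w_a(x))) + (x²−1)/(x²+1) )² dx tends to 2·ln 2 − 1 as a → 0⁺, where Δ_a(w) = (1−a²)·w² + a². -/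
/-!
With `g = (1 - x²)/(1 + x²)` and `φ_a(w) = w / √Δ_a(w)`, the integrand is `(1/x)(φ_a(w) - g)²`.
For `a ∈ (0, 1]` the map `φ_a` is increasing on `w ≥ 0`, satisfies `φ_a(g) ≥ g`, and is at most `1`
when `w² ≤ 1`, so the integrand lies between its value at `w = g` and `(1/x)(1 - g)² = 4x³/(1 + x²)²`,
whose integral over `[0, 1]` is `2 ln 2 - 1`. Since `φ_a(g) → φ_0(g) = 1` for `g > 0`, dominated
convergence sends the lower integral to the same value.
-/

open Filter Set intervalIntegral Real MeasureTheory Topology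

noncomputable def deltaRatio (a u : ℝ) : ℝ := u / √((1 - a ^ 2) * u ^ 2 + a ^ 2)

/-- The height of the point of the unit sphere that stereographically projects to radius `x`. -/
noncomputable def stereoHeight (x : ℝ) : ℝ := (1 - x ^ 2) / (1 + x ^ 2)

/-- `density x (deltaRatio a w)` is the integrand of the theorem. -/
noncomputable def density (x r : ℝ) : ℝ := (1 / x) * (r + (x ^ 2 - 1) / (x ^ 2 + 1)) ^ 2

section DeltaRatio

variable {a u : ℝ}

lemma delta_pos (ha : 0 < a) (ha1 : a ≤ 1) (u : ℝ) : 0 < (1 - a ^ 2) * u ^ 2 + a ^ 2 := by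
  have : 0 ≤ 1 - a ^ 2 := by nlinarith
  positivity

lemma deltaRatio_le_one (hu : u ^ 2 ≤ 1) : deltaRatio a u ≤ 1 := by
  refine div_le_one_of_le₀ ?_ (sqrt_nonneg _)
  calc u ≤ √(u ^ 2) := by rw [sqrt_sq_eq_abs]; exact le_abs_self u
    _ ≤ √((1 - a ^ 2) * u ^ 2 + a ^ 2) := sqrt_le_sqrt (by nlinarith [sq_nonneg a])

lemma deltaRatio_eq_sqrt (hu : 0 ≤ u) :
    deltaRatio a u = √(u ^ 2 / ((1 - a ^ 2) * u ^ 2 + a ^ 2)) := by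
  rw [deltaRatio, sqrt_div (sq_nonneg u), sqrt_sq hu]

lemma monotoneOn_deltaRatio (ha : 0 < a) (ha1 : a ≤ 1) : MonotoneOn (deltaRatio a) (Ici 0) := by
  intro u hu v hv huv
  rw [deltaRatio_eq_sqrt hu, deltaRatio_eq_sqrt hv]
  refine sqrt_le_sqrt ((div_le_div_iff₀ (delta_pos ha ha1 u) (delta_pos ha ha1 v)).2 ?_)
  nlinarith [mul_le_mul huv huv hu (le_trans hu huv)]

lemma le_deltaRatio (ha : 0 < a) (ha1 : a ≤ 1) (hu : 0 ≤ u) (hu1 : u ≤ 1) :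
    u ≤ deltaRatio a u := by
  refine le_div_self hu (sqrt_pos.2 (delta_pos ha ha1 u)) (sqrt_le_one.2 ?_)
  have h1a : 0 ≤ 1 - a ^ 2 := by nlinarith
  nlinarith [mul_le_mul_of_nonneg_left (mul_le_one₀ hu1 hu hu1) h1a]

lemma tendsto_deltaRatio_zero (hu : 0 < u) : Tendsto (deltaRatio · u) (𝓝 0) (𝓝 1) := by
  have : ContinuousAt (deltaRatio · u) 0 := by
    unfold deltaRatio
    fun_prop (disch := norm_num; positivity)
  simpa [deltaRatio, sqrt_sq hu.le, hu.ne'] using this.tendsto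

lemma measurable_deltaRatio : Measurable (deltaRatio a) := by
  unfold deltaRatio; fun_prop

end DeltaRatio

lemma stereoHeight_nonneg {x : ℝ} (hx : 0 ≤ x) (hx1 : x ≤ 1) : 0 ≤ stereoHeight x :=
  div_nonneg (by nlinarith) (by positivity)

lemma stereoHeight_pos {x : ℝ} (hx : 0 ≤ x) (hx1 : x < 1) : 0 < stereoHeight x :=
  div_pos (by nlinarith) (by positivity)

lemma stereoHeight_le_one (x : ℝ) : stereoHeight x ≤ 1 :=
  (div_le_one (by positivity)).2 (by nlinarith [sq_nonneg x])

lemma density_mono {x r s : ℝ} (hx : 0 ≤ x) (hr : stereoHeight x ≤ r) (hrs : r ≤ s) :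
    density x r ≤ density x s := by
  have : (x ^ 2 - 1) / (x ^ 2 + 1) = -stereoHeight x := by rw [stereoHeight]; ring
  unfold density
  rw [this]
  gcongr
  linarith

lemma density_one (x : ℝ) : density x 1 = 4 * x ^ 3 / (1 + x ^ 2) ^ 2 := by
  rcases eq_or_ne x 0 with rfl | hx
  · simp [density]
  · unfold density; field_simp; ring

lemma continuous_density (x : ℝ) : Continuous (density x) := by
  unfold density; fun_prop

lemma measurable_density {r : ℝ → ℝ} (hr : Measurable r) : Measurable fun x => density x (r x) := by
  unfold density; fun_prop


lemma continuous_density_one : Continuous fun x => density x 1 := by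
  simp_rw [density_one]
  exact Continuous.div (by fun_prop) (by fun_prop) fun x => by positivity

lemma integral_density_one : ∫ x in (0:ℝ)..1, density x 1 = 2 * log 2 - 1 := by
  have hderiv : ∀ x ∈ uIcc (0:ℝ) 1,
      HasDerivAt (fun y => 2 * log (1 + y ^ 2) + 2 / (1 + y ^ 2)) (density x 1) x := by
    intro x _
    have hx : 1 + x ^ 2 ≠ 0 := by positivity
    have hsq : HasDerivAt (fun y : ℝ => 1 + y ^ 2) (2 * x) x := by
      simpa using (hasDerivAt_pow 2 x).const_add 1
    refine (((hsq.log hx).const_mul 2).add ((hasDerivAt_const x (2:ℝ)).div hsq hx)).congr_deriv ?_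
    rw [density_one]
    field_simp
    ring
  rw [integral_eq_sub_of_hasDerivAt hderiv]
  · norm_num; ring
  · exact continuous_density_one.intervalIntegrable _ _

lemma measurable_stereoHeight : Measurable stereoHeight := by
  unfold stereoHeight; fun_prop

lemma density_nonneg {x : ℝ} (hx : 0 ≤ x) (r : ℝ) : 0 ≤ density x r := by
  unfold density; positivity

lemma stereoHeight_le_deltaRatio {a x u : ℝ} (ha : 0 < a) (ha1 : a ≤ 1) (hx : 0 ≤ x) (hx1 : x ≤ 1)
    (hu : stereoHeight x ≤ u) : stereoHeight x ≤ deltaRatio a u := by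
  have hg := stereoHeight_nonneg hx hx1
  exact (le_deltaRatio ha ha1 hg (stereoHeight_le_one x)).trans
    (monotoneOn_deltaRatio ha ha1 hg (hg.trans hu) hu)

section Integral

variable {r s : ℝ → ℝ}

lemma intervalIntegrable_density (hr : Measurable r)
    (hlo : ∀ x ∈ Ioc (0:ℝ) 1, stereoHeight x ≤ r x) (hhi : ∀ x ∈ Ioc (0:ℝ) 1, r x ≤ 1) :
    IntervalIntegrable (fun x => density x (r x)) volume 0 1 := by
  refine (continuous_density_one.intervalIntegrable 0 1).mono_fun'
    (measurable_density hr).aestronglyMeasurable ?_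
  rw [uIoc_of_le zero_le_one]
  filter_upwards [ae_restrict_mem measurableSet_Ioc] with x hx
  rw [norm_of_nonneg (density_nonneg hx.1.le _)]
  exact density_mono hx.1.le (hlo x hx) (hhi x hx)

lemma integral_density_mono (hr : Measurable r) (hs : Measurable s)
    (hlo : ∀ x ∈ Ioc (0:ℝ) 1, stereoHeight x ≤ r x) (hrs : ∀ x ∈ Ioc (0:ℝ) 1, r x ≤ s x)
    (hhi : ∀ x ∈ Ioc (0:ℝ) 1, s x ≤ 1) :
    ∫ x in (0:ℝ)..1, density x (r x) ≤ ∫ x in (0:ℝ)..1, density x (s x) := by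
  refine integral_mono_on_of_le_Ioo zero_le_one
    (intervalIntegrable_density hr hlo fun x hx => (hrs x hx).trans (hhi x hx))
    (intervalIntegrable_density hs (fun x hx => (hlo x hx).trans (hrs x hx)) hhi) fun x hx => ?_
  have hx' := Ioo_subset_Ioc_self hx
  exact density_mono hx.1.le (hlo x hx') (hrs x hx')

end Integral

lemma tendsto_integral_density_deltaRatio_stereoHeight :
    Tendsto (fun a => ∫ x in (0:ℝ)..1, density x (deltaRatio a (stereoHeight x))) (𝓝[>] 0)
      (𝓝 (∫ x in (0:ℝ)..1, density x 1)) := by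
  refine tendsto_integral_filter_of_dominated_convergence (fun x => density x 1)
    (Eventually.of_forall fun a => (measurable_density
      (measurable_deltaRatio.comp measurable_stereoHeight)).aestronglyMeasurable)
    ?_ (continuous_density_one.intervalIntegrable 0 1) ?_
  · filter_upwards [Ioo_mem_nhdsGT one_pos] with a ha
    refine ae_of_all _ fun x hx => ?_
    rw [uIoc_of_le zero_le_one] at hx
    have hg := stereoHeight_nonneg hx.1.le hx.2
    rw [norm_of_nonneg (density_nonneg hx.1.le _)]
    exact density_mono hx.1.le (stereoHeight_le_deltaRatio ha.1 ha.2.le hx.1.le hx.2 le_rfl)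
      (deltaRatio_le_one (pow_le_one₀ hg (stereoHeight_le_one x)))
  · filter_upwards [Measure.ae_ne volume 1] with x hx1 hx
    rw [uIoc_of_le zero_le_one] at hx
    have hg := stereoHeight_pos hx.1.le (hx.2.lt_of_ne hx1)
    exact ((continuous_density x).tendsto 1).comp
      ((tendsto_deltaRatio_zero hg).mono_left nhdsWithin_le_nhds)

/-- Suppose for each `a ∈ (0,1)` a measurable function `w_a : (0,1] → ℝ` satisfies
`(1-x²)/(1+x²) ≤ w_a(x)` and `w_a(x)² ≤ 1 - x^(2/√(1-a²))` on `(0,1]`. Then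
`∫₀¹ (1/x)·(w_a(x)/√(Δ_a(w_a(x))) + (x²-1)/(x²+1))² dx → 2·ln 2 - 1` as `a → 0⁺`. -/
theorem stmt_19 (w : ℝ → ℝ → ℝ)
    (hmeas : ∀ a ∈ Set.Ioo (0:ℝ) 1, Measurable (w a))
    (hlow : ∀ a ∈ Set.Ioo (0:ℝ) 1, ∀ x ∈ Set.Ioc (0:ℝ) 1,
      (1 - x^2) / (1 + x^2) ≤ w a x)
    (hup : ∀ a ∈ Set.Ioo (0:ℝ) 1, ∀ x ∈ Set.Ioc (0:ℝ) 1,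
      (w a x)^2 ≤ 1 - x ^ (2 / Real.sqrt (1 - a^2))) :
    Filter.Tendsto
      (fun a : ℝ => ∫ x in (0:ℝ)..1,
        (1/x) * (w a x / Real.sqrt ((1 - a^2) * (w a x)^2 + a^2)
          + (x^2 - 1) / (x^2 + 1))^2)
      (nhdsWithin 0 (Set.Ioi 0)) (nhds (2 * Real.log 2 - 1)) := by
  have hle_one : ∀ a ∈ Ioo (0:ℝ) 1, ∀ x ∈ Ioc (0:ℝ) 1, deltaRatio a (w a x) ≤ 1 :=
    fun a ha x hx => deltaRatio_le_one ((hup a ha x hx).trans (sub_le_self _ (rpow_nonneg hx.1.le _)))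
  have hmeas' : ∀ a ∈ Ioo (0:ℝ) 1, Measurable fun x => deltaRatio a (w a x) :=
    fun a ha => measurable_deltaRatio.comp (hmeas a ha)
  rw [← integral_density_one]
  refine tendsto_of_tendsto_of_tendsto_of_le_of_le'
    tendsto_integral_density_deltaRatio_stereoHeight tendsto_const_nhds ?_ ?_ <;>
    filter_upwards [Ioo_mem_nhdsGT one_pos] with a ha
  · refine integral_density_mono (measurable_deltaRatio.comp measurable_stereoHeight) (hmeas' a ha)
      (fun x hx => stereoHeight_le_deltaRatio ha.1 ha.2.le hx.1.le hx.2 le_rfl)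
      (fun x hx => ?_) (hle_one a ha)
    have hg := stereoHeight_nonneg hx.1.le hx.2
    exact monotoneOn_deltaRatio ha.1 ha.2.le hg (hg.trans (hlow a ha x hx)) (hlow a ha x hx)
  · exact integral_density_mono (hmeas' a ha) measurable_const
      (fun x hx => stereoHeight_le_deltaRatio ha.1 ha.2.le hx.1.le hx.2 (hlow a ha x hx))
      (hle_one a ha) fun _ _ => le_rfl
end
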